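/- arXiv:0810.0209 — 7 statements merged into one kernel-verified Lean document; each statement's English description precedes it below -/
import Mathlib

section
/- (Desch–Schappacher–Webb criterion.) Let (T(t))_{t≥0} be a strongly continuous semigroup on a separable complex Banach space B. Let Ω ⊆ ℂ be an open connected set with Ω ∩ iℝ ≠ ∅, and let F : Ω → B be a map such that: (a) T(t)F(λ) = e^{λt} F(λ) for every λ ∈ Ω and every t ≥ 0; (b) for every continuous linear functional φ ∈ B′ the map λ ↦ φ(F(λ)) is holomorphic on Ω; (c) if φ ∈ B′ satisfies φ(F(λ)) = 0 for all λ ∈ Ω, then φ = 0. Then T is chaotic. -/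
/-!
A functional `φ` annihilating the eigenvectors `F z`, `z ∈ Ω ∩ S`, makes the holomorphic function
`φ ∘ F` vanish on `Ω ∩ S`; if `S` accumulates at a point of the connected set `Ω`, the identity
theorem and hypothesis (c) force `φ = 0`, so these eigenvectors span a dense subspace. Apply this
at a point `z₀ ∈ Ω ∩ iℝ` to three sets of eigenvalues accumulating there.

For `S = iℚ`: `F (i q)` has period `2π · q.den`, so finite combinations have a common period and
periodic points are dense. For `S = {Re < 0}` and `S = {Re > 0}`: on the first span `T t x → 0`,
on the second every `y` has preimages `T t (w t) = y` with `w t → 0`. For nonempty open `U`, `V`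
pick `x ∈ U` in the first span and `y ∈ V` in the second: then `x + w t ∈ U` and
`T t (x + w t) ∈ V` for large `t`, and Baire's theorem on the separable Banach space turns this
transitivity into a dense orbit.
-/

open Filter Set Topology Complex Real

theorem dense_span_of_forall_dual_eq_zero {𝕜 E : Type*} [RCLike 𝕜] [NormedAddCommGroup E]
    [NormedSpace 𝕜 E] {S : Set E}
    (h : ∀ φ : E →L[𝕜] 𝕜, (∀ x ∈ S, φ x = 0) → φ = 0) :
    Dense (Submodule.span 𝕜 S : Set E) := by
  set M := (Submodule.span 𝕜 S).topologicalClosure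
  have : IsClosed (M : Set E) := (Submodule.span 𝕜 S).isClosed_topologicalClosure
  rw [Submodule.dense_iff_topologicalClosure_eq_top, Submodule.eq_top_iff']
  intro x
  rw [← Submodule.Quotient.mk_eq_zero]
  refine SeparatingDual.eq_zero_of_forall_dual_eq_zero (R := 𝕜) fun g => ?_
  have hg : g.comp M.mkQL = 0 := h _ fun s hs => by
    have hsM : s ∈ M := (Submodule.span 𝕜 S).le_topologicalClosure (Submodule.subset_span hs)
    simp [(Submodule.Quotient.mk_eq_zero M).2 hsM]
  exact DFunLike.congr_fun hg x

theorem dense_span_image_of_frequently {E : Type*} [NormedAddCommGroup E] [NormedSpace ℂ E]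
    {Ω S : Set ℂ} {F : ℂ → E} (hΩ : IsOpen Ω) (hΩc : IsPreconnected Ω)
    (hFhol : ∀ φ : E →L[ℂ] ℂ, DifferentiableOn ℂ (fun z => φ (F z)) Ω)
    (hFsep : ∀ φ : E →L[ℂ] ℂ, (∀ z ∈ Ω, φ (F z) = 0) → φ = 0)
    {z₀ : ℂ} (hz₀ : z₀ ∈ Ω) (hS : ∃ᶠ z in 𝓝[≠] z₀, z ∈ S) :
    Dense (Submodule.span ℂ (F '' (Ω ∩ S)) : Set E) := by
  refine dense_span_of_forall_dual_eq_zero fun φ hφ => hFsep φ ?_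
  have hzero : ∃ᶠ z in 𝓝[≠] z₀, φ (F z) = 0 :=
    (hS.and_eventually (nhdsWithin_le_nhds (hΩ.mem_nhds hz₀))).mono
      fun z hz => hφ _ ⟨z, ⟨hz.2, hz.1⟩, rfl⟩
  exact ((hFhol φ).analyticOnNhd hΩ).eqOn_zero_of_preconnected_of_frequently_eq_zero
    hΩc hz₀ hzero

namespace Complex

theorem frequently_re_lt_nhdsNE (z₀ : ℂ) :
    ∃ᶠ z in 𝓝[≠] z₀, z ∈ {z : ℂ | z.re < z₀.re} := by
  rw [← mem_closure_ne_iff_frequently_within, sdiff_singleton_eq_self (by simp),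
    closure_setOfPred_re_lt]
  exact le_refl z₀.re

theorem frequently_lt_re_nhdsNE (z₀ : ℂ) :
    ∃ᶠ z in 𝓝[≠] z₀, z ∈ {z : ℂ | z₀.re < z.re} := by
  rw [← mem_closure_ne_iff_frequently_within, sdiff_singleton_eq_self (by simp),
    closure_setOfPred_lt_re]
  exact le_refl z₀.re

theorem frequently_mem_range_I_mul_ratCast_nhdsNE {z₀ : ℂ} (hz₀ : z₀.re = 0) :
    ∃ᶠ z in 𝓝[≠] z₀, z ∈ range fun q : ℚ => I * q := by
  have hz₀I : z₀ = I * z₀.im := by apply Complex.ext <;> simp [hz₀]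
  rw [← mem_closure_ne_iff_frequently_within]
  have hD : Dense (range ((↑) : ℚ → ℝ) \ {z₀.im}) :=
    Rat.denseRange_cast.sdiff_singleton z₀.im
  have hsub : (fun x : ℝ => I * x) '' (range ((↑) : ℚ → ℝ) \ {z₀.im}) ⊆
      (range fun q : ℚ => I * q) \ {z₀} := by
    rintro _ ⟨_, ⟨⟨q, rfl⟩, hne⟩, rfl⟩
    refine ⟨⟨q, by simp⟩, fun h => hne ?_⟩
    rw [hz₀I] at h
    exact_mod_cast mul_left_cancel₀ I_ne_zero h
  refine closure_mono hsub (image_closure_subset_closure_image (by fun_prop) ?_)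
  exact ⟨z₀.im, hD.closure_eq ▸ mem_univ _, hz₀I.symm⟩

theorem exp_mul_two_pi_mul_natCast_eq_one (q : ℚ) {n : ℕ} (hn : q.den ∣ n) :
    cexp (I * q * ↑(2 * π * n)) = 1 := by
  obtain ⟨k, rfl⟩ := hn
  have hq : (q : ℂ) * q.den = q.num := by
    exact_mod_cast congrArg ((↑) : ℚ → ℂ) q.mul_den_eq_num
  rw [exp_eq_one_iff]
  exact ⟨q.num * k, by push_cast; linear_combination (2 * π * I * k) * hq⟩

theorem tendsto_exp_mul_ofReal_atTop_zero {z : ℂ} (hz : z.re < 0) :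
    Tendsto (fun t : ℝ => cexp (z * t)) atTop (𝓝 0) := by
  rw [tendsto_zero_iff_norm_tendsto_zero]
  simp only [norm_exp, re_mul_ofReal]
  exact Real.tendsto_exp_atBot.comp (tendsto_id.const_mul_atTop_of_neg hz)

end Complex

section Eigenvectors

variable {E : Type*} [NormedAddCommGroup E] [NormedSpace ℂ E] (T : ℝ → E →L[ℂ] E)
  {Ω : Set ℂ} {F : ℂ → E}
  (hFeig : ∀ z ∈ Ω, ∀ t : ℝ, 0 ≤ t → T t (F z) = cexp (z * t) • F z)
include hFeig

theorem exists_common_period_of_mem_span_I_mul_ratCast {x : E}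
    (hx : x ∈ Submodule.span ℂ (F '' (Ω ∩ range fun q : ℚ => I * q))) :
    ∃ N : ℕ, 0 < N ∧ ∀ n : ℕ, N ∣ n → T (2 * π * n) x = x := by
  induction hx using Submodule.span_induction with
  | mem _ hx =>
    obtain ⟨_, ⟨hzΩ, q, rfl⟩, rfl⟩ := hx
    refine ⟨q.den, q.pos, fun n hn => ?_⟩
    rw [hFeig _ hzΩ _ (by positivity), exp_mul_two_pi_mul_natCast_eq_one q hn, one_smul]
  | zero => exact ⟨1, one_pos, fun n _ => map_zero _⟩
  | add x y _ _ hx hy =>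
    obtain ⟨N, hN, hNx⟩ := hx
    obtain ⟨M, hM, hMy⟩ := hy
    refine ⟨N * M, mul_pos hN hM, fun n hn => ?_⟩
    rw [map_add, hNx n (dvd_of_mul_right_dvd hn), hMy n (dvd_of_mul_left_dvd hn)]
  | smul c x _ hx =>
    obtain ⟨N, hN, hNx⟩ := hx
    exact ⟨N, hN, fun n hn => by rw [map_smul, hNx n hn]⟩

theorem tendsto_apply_zero_of_mem_span_re_neg {x : E}
    (hx : x ∈ Submodule.span ℂ (F '' (Ω ∩ {z | z.re < 0}))) :
    Tendsto (fun t => T t x) atTop (𝓝 0) := by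
  induction hx using Submodule.span_induction with
  | mem _ hx =>
    obtain ⟨z, ⟨hzΩ, hz⟩, rfl⟩ := hx
    have h := (tendsto_exp_mul_ofReal_atTop_zero hz).smul_const (F z)
    rw [zero_smul] at h
    exact h.congr' ((eventually_ge_atTop 0).mono fun t ht => (hFeig z hzΩ t ht).symm)
  | zero => simp
  | add x y _ _ hx hy => simpa using hx.add hy
  | smul c x _ hx => simpa using hx.const_smul c

theorem exists_tendsto_zero_apply_eq_of_mem_span_re_pos {x : E}
    (hx : x ∈ Submodule.span ℂ (F '' (Ω ∩ {z | 0 < z.re}))) :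
    ∃ w : ℝ → E, Tendsto w atTop (𝓝 0) ∧ ∀ᶠ t in atTop, T t (w t) = x := by
  induction hx using Submodule.span_induction with
  | mem _ hx =>
    obtain ⟨z, ⟨hzΩ, hz⟩, rfl⟩ := hx
    refine ⟨fun t => cexp (-z * t) • F z, ?_, ?_⟩
    · simpa using
        (tendsto_exp_mul_ofReal_atTop_zero (z := -z) (by simpa using hz)).smul_const (F z)
    · filter_upwards [eventually_ge_atTop 0] with t ht
      rw [map_smul, hFeig z hzΩ t ht, smul_smul, ← Complex.exp_add]
      simp
  | zero => exact ⟨0, tendsto_const_nhds, Eventually.of_forall fun t => map_zero _⟩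
  | add x y _ _ hx hy =>
    obtain ⟨w, hw, hTw⟩ := hx
    obtain ⟨w', hw', hTw'⟩ := hy
    refine ⟨fun t => w t + w' t, by simpa using hw.add hw', ?_⟩
    filter_upwards [hTw, hTw'] with t ht ht'
    rw [map_add, ht, ht']
  | smul c x _ hx =>
    obtain ⟨w, hw, hTw⟩ := hx
    refine ⟨fun t => c • w t, by simpa using hw.const_smul c, ?_⟩
    filter_upwards [hTw] with t ht
    rw [map_smul, ht]

end Eigenvectors

theorem eventually_inter_preimage_nonempty_of_dense {ι R E : Type*} [Semiring R]
    [TopologicalSpace E] [AddCommMonoid E] [ContinuousAdd E] [Module R E] {l : Filter ι}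
    (T : ι → E →L[R] E) {D₁ D₂ : Set E} (hD₁ : Dense D₁) (hD₂ : Dense D₂)
    (h₁ : ∀ x ∈ D₁, Tendsto (fun i => T i x) l (𝓝 0))
    (h₂ : ∀ y ∈ D₂, ∃ w : ι → E, Tendsto w l (𝓝 0) ∧ ∀ᶠ i in l, T i (w i) = y)
    {U V : Set E} (hU : IsOpen U) (hV : IsOpen V) (hU₀ : U.Nonempty) (hV₀ : V.Nonempty) :
    ∀ᶠ i in l, (U ∩ T i ⁻¹' V).Nonempty := by
  obtain ⟨x, hxU, hxD⟩ := hD₁.inter_open_nonempty U hU hU₀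
  obtain ⟨y, hyV, hyD⟩ := hD₂.inter_open_nonempty V hV hV₀
  obtain ⟨w, hw, hTw⟩ := h₂ y hyD
  have hstart : Tendsto (fun i => x + w i) l (𝓝 x) := by simpa using hw.const_add x
  have hend : Tendsto (fun i => T i (x + w i)) l (𝓝 y) := by
    refine ((h₁ x hxD).add_const y).congr' (hTw.mono fun i hi => ?_) |>.trans (by simp)
    rw [map_add, hi]
  filter_upwards [hstart.eventually_mem (hU.mem_nhds hxU), hend.eventually_mem (hV.mem_nhds hyV)]
    with i hiU hiV
  exact ⟨_, hiU, hiV⟩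

theorem exists_dense_orbit_of_forall_inter_preimage_nonempty {ι X : Type*}
    [TopologicalSpace X] [BaireSpace X] [SecondCountableTopology X] [Nonempty X]
    (g : ι → X → X) (hg : ∀ i, Continuous (g i))
    (htrans : ∀ U V : Set X, IsOpen U → IsOpen V → U.Nonempty → V.Nonempty →
      ∃ i, (U ∩ g i ⁻¹' V).Nonempty) :
    ∃ x, Dense (range fun i => g i x) := by
  obtain ⟨b, hbc, hb₀, hb⟩ := TopologicalSpace.exists_countable_basis X
  have hvisit : Dense (⋂ V ∈ b, ⋃ i, g i ⁻¹' V) := by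
    refine dense_biInter_of_isOpen
      (fun V hV => isOpen_iUnion fun i => (hb.isOpen hV).preimage (hg i)) hbc fun V hV => ?_
    refine dense_iff_inter_open.2 fun U hU hU₀ => ?_
    have hV₀ : V.Nonempty := nonempty_iff_ne_empty.2 fun h => hb₀ (h ▸ hV)
    obtain ⟨i, x, hxU, hxV⟩ := htrans U V hU (hb.isOpen hV) hU₀ hV₀
    exact ⟨x, hxU, mem_iUnion.2 ⟨i, hxV⟩⟩
  obtain ⟨x, hx⟩ := hvisit.nonempty
  refine ⟨x, dense_iff_inter_open.2 fun W hW ⟨y, hyW⟩ => ?_⟩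
  obtain ⟨V, hVb, -, hVW⟩ := hb.exists_subset_of_mem_open hyW hW
  obtain ⟨i, hi⟩ := mem_iUnion.1 (mem_iInter₂.1 hx V hVb)
  exact ⟨g i x, hVW hi, i, rfl⟩

theorem desch_schappacher_webb_criterion_general
    {B : Type*} [NormedAddCommGroup B] [NormedSpace ℂ B] [CompleteSpace B]
    [TopologicalSpace.SeparableSpace B]
    (T : ℝ → B →L[ℂ] B)
    (Ω : Set ℂ) (hΩopen : IsOpen Ω) (hΩconn : IsConnected Ω)
    (hΩim : ∃ z ∈ Ω, z.re = 0)
    (F : ℂ → B)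
    (hFeig : ∀ z ∈ Ω, ∀ t : ℝ, 0 ≤ t → T t (F z) = Complex.exp (z * t) • F z)
    (hFhol : ∀ φ : B →L[ℂ] ℂ, DifferentiableOn ℂ (fun z => φ (F z)) Ω)
    (hFsep : ∀ φ : B →L[ℂ] ℂ, (∀ z ∈ Ω, φ (F z) = 0) → φ = 0) :
    (∃ f : B, Dense {y : B | ∃ t : ℝ, 0 ≤ t ∧ T t f = y}) ∧
      Dense {f : B | ∃ t : ℝ, 0 < t ∧ T t f = f} := by
  obtain ⟨z₀, hz₀Ω, hz₀re⟩ := hΩim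
  have hdense {S : Set ℂ} (hS : ∃ᶠ z in 𝓝[≠] z₀, z ∈ S) :=
    dense_span_image_of_frequently hΩopen hΩconn.isPreconnected hFhol hFsep hz₀Ω hS
  have hneg := hdense (hz₀re ▸ frequently_re_lt_nhdsNE z₀)
  have hpos := hdense (hz₀re ▸ frequently_lt_re_nhdsNE z₀)
  have hrat := hdense (frequently_mem_range_I_mul_ratCast_nhdsNE hz₀re)
  constructor
  · obtain ⟨f, hf⟩ := exists_dense_orbit_of_forall_inter_preimage_nonempty
      (fun t : Ici (0 : ℝ) => T t) (fun t => (T t).continuous) fun U V hU hV hU₀ hV₀ => by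
        obtain ⟨t, ht, ht₀⟩ := ((eventually_inter_preimage_nonempty_of_dense T hneg hpos
          (fun _ => tendsto_apply_zero_of_mem_span_re_neg T hFeig)
          (fun _ => exists_tendsto_zero_apply_eq_of_mem_span_re_pos T hFeig)
          hU hV hU₀ hV₀).and (eventually_ge_atTop 0)).exists
        exact ⟨⟨t, ht₀⟩, ht⟩
    exact ⟨f, hf.mono <| by rintro _ ⟨t, rfl⟩; exact ⟨t, t.2, rfl⟩⟩
  · refine hrat.mono fun x hx => ?_
    obtain ⟨N, hN, hNx⟩ := exists_common_period_of_mem_span_I_mul_ratCast T hFeig hx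
    exact ⟨2 * π * N, by positivity, hNx N dvd_rfl⟩

/-- The Desch–Schappacher–Webb criterion: a strongly continuous semigroup on a separable
complex Banach space admitting an analytically parametrized family of eigenvectors, with
eigenvalues filling an open connected set meeting the imaginary axis and with total
(separating) range, is chaotic. -/
theorem desch_schappacher_webb_criterion
    {B : Type*} [NormedAddCommGroup B] [NormedSpace ℂ B] [CompleteSpace B]
    [TopologicalSpace.SeparableSpace B]
    (T : ℝ → B →L[ℂ] B)
    (hT0 : T 0 = 1)
    (hTadd : ∀ s t : ℝ, 0 ≤ s → 0 ≤ t → T (s + t) = (T s).comp (T t))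
    (hTcont : ∀ f : B, ContinuousOn (fun t => T t f) (Set.Ici (0 : ℝ)))
    (Ω : Set ℂ) (hΩopen : IsOpen Ω) (hΩconn : IsConnected Ω)
    (hΩim : ∃ z ∈ Ω, z.re = 0)
    (F : ℂ → B)
    (hFeig : ∀ z ∈ Ω, ∀ t : ℝ, 0 ≤ t → T t (F z) = Complex.exp (z * t) • F z)
    (hFhol : ∀ φ : B →L[ℂ] ℂ, DifferentiableOn ℂ (fun z => φ (F z)) Ω)
    (hFsep : ∀ φ : B →L[ℂ] ℂ, (∀ z ∈ Ω, φ (F z) = 0) → φ = 0) :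
    (∃ f : B, Dense {y : B | ∃ t : ℝ, 0 ≤ t ∧ T t f = y}) ∧
      Dense {f : B | ∃ t : ℝ, 0 < t ∧ T t f = f} :=
  desch_schappacher_webb_criterion_general T Ω hΩopen hΩconn hΩim F hFeig hFhol hFsep
end

section
/- Let B be a complex Banach space, Ω ⊆ ℂ an open connected set, and F : Ω → B a map such that: (a) for every continuous linear functional φ ∈ B′ the map λ ↦ φ(F(λ)) is holomorphic on Ω; (b) if φ ∈ B′ satisfies φ(F(λ)) = 0 for all λ ∈ Ω, then φ = 0. Then for every subset U ⊆ Ω possessing an accumulation point that belongs to Ω, the linear span of {F(λ) : λ ∈ U} is dense in B. -/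
/-!
If the span of `F '' U` were not dense, Hahn–Banach would give a nonzero functional `φ`
vanishing on it. Then `φ ∘ F` is holomorphic on the connected set `Ω` and vanishes on a set
accumulating at a point of `Ω`, so by the identity theorem it vanishes on all of `Ω`, and the
separation hypothesis forces `φ = 0`.
-/

open Filter Set Topology

section HahnBanach

variable {𝕜 E : Type*} [RCLike 𝕜] [NormedAddCommGroup E] [NormedSpace 𝕜 E]

/-- Separate `x` from the closed subspace `closure p` by a functional on `E ⧸ closure p`. -/
theorem Submodule.exists_dual_eq_zero_ne_zero_of_notMem_topologicalClosure
    (p : Submodule 𝕜 E) {x : E} (hx : x ∉ p.topologicalClosure) :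
    ∃ φ : StrongDual 𝕜 E, (∀ y ∈ p, φ y = 0) ∧ φ x ≠ 0 := by
  set S := p.topologicalClosure
  have : IsClosed (S : Set E) := p.isClosed_topologicalClosure
  obtain ⟨g, hg⟩ := SeparatingDual.exists_ne_zero (R := 𝕜)
    (mt (Submodule.Quotient.mk_eq_zero S).1 hx)
  refine ⟨g.comp S.mkQL, fun y hy => ?_, hg⟩
  simp [(Submodule.Quotient.mk_eq_zero S).2 (p.le_topologicalClosure hy)]

theorem dense_span_of_forall_dual_eq_zero_s3 {s : Set E}
    (h : ∀ φ : StrongDual 𝕜 E, (∀ y ∈ s, φ y = 0) → φ = 0) :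
    Dense (Submodule.span 𝕜 s : Set E) := by
  refine fun x => by_contra fun hx => ?_
  obtain ⟨φ, hφs, hφx⟩ :=
    (Submodule.span 𝕜 s).exists_dual_eq_zero_ne_zero_of_notMem_topologicalClosure hx
  exact hφx (by rw [h φ fun y hy => hφs y (Submodule.subset_span hy)]; rfl)

end HahnBanach

theorem AnalyticOnNhd.eqOn_zero_of_accPt
    {𝕜 E : Type*} [NontriviallyNormedField 𝕜] [NormedAddCommGroup E] [NormedSpace 𝕜 E]
    {f : 𝕜 → E} {Ω U : Set 𝕜} {z₀ : 𝕜} (hf : AnalyticOnNhd 𝕜 f Ω) (hΩ : IsPreconnected Ω)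
    (hz₀ : z₀ ∈ Ω) (hacc : AccPt z₀ (𝓟 U)) (hfU : EqOn f 0 U) : EqOn f 0 Ω :=
  hf.eqOn_zero_of_preconnected_of_frequently_eq_zero hΩ hz₀ <|
    (accPt_iff_frequently_nhdsNE.1 hacc).mono fun _ hz => hfU hz

theorem span_of_weakly_holomorphic_family_dense_general
    {B : Type*} [NormedAddCommGroup B] [NormedSpace ℂ B]
    (Ω : Set ℂ) (hΩopen : IsOpen Ω) (hΩconn : IsConnected Ω)
    (F : ℂ → B)
    (hFhol : ∀ φ : B →L[ℂ] ℂ, DifferentiableOn ℂ (fun z => φ (F z)) Ω)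
    (hFsep : ∀ φ : B →L[ℂ] ℂ, (∀ z ∈ Ω, φ (F z) = 0) → φ = 0)
    (U : Set ℂ) (z₀ : ℂ) (hz₀ : z₀ ∈ Ω) (hacc : AccPt z₀ (Filter.principal U)) :
    Dense (↑(Submodule.span ℂ (F '' U)) : Set B) := by
  refine dense_span_of_forall_dual_eq_zero_s3 fun φ hφU => hFsep φ fun z hz => ?_
  have hφFU : EqOn (fun z => φ (F z)) 0 U := fun w hw => hφU _ (mem_image_of_mem F hw)
  exact ((hFhol φ).analyticOnNhd hΩopen).eqOn_zero_of_accPt hΩconn.isPreconnected hz₀ hacc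
    hφFU hz

/-- Key step in the proof of the Desch–Schappacher–Webb criterion: if `F : Ω → B` is
weakly holomorphic with separating range, then for any `U ⊆ Ω` having an accumulation
point inside `Ω`, the span of `F(U)` is dense in `B`. -/
theorem span_of_weakly_holomorphic_family_dense
    {B : Type*} [NormedAddCommGroup B] [NormedSpace ℂ B]
    (Ω : Set ℂ) (hΩopen : IsOpen Ω) (hΩconn : IsConnected Ω)
    (F : ℂ → B)
    (hFhol : ∀ φ : B →L[ℂ] ℂ, DifferentiableOn ℂ (fun z => φ (F z)) Ω)
    (hFsep : ∀ φ : B →L[ℂ] ℂ, (∀ z ∈ Ω, φ (F z) = 0) → φ = 0)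
    (U : Set ℂ) (hU : U ⊆ Ω) (z₀ : ℂ) (hz₀ : z₀ ∈ Ω) (hacc : AccPt z₀ (Filter.principal U)) :
    Dense (↑(Submodule.span ℂ (F '' U)) : Set B) :=
  span_of_weakly_holomorphic_family_dense_general Ω hΩopen hΩconn F hFhol hFsep U z₀ hz₀ hacc
end

section
/- Let (T(t))_{t≥0} be a strongly continuous semigroup on a separable Banach space B. Define B₀ = {f ∈ B : T(t)f → 0 as t → ∞} and B_∞ = {f ∈ B : for every ε > 0 there exist g ∈ B and t > 0 with ‖g‖ < ε and ‖T(t)g − f‖ < ε}. If B₀ and B_∞ are both dense in B, then T has a dense orbit, i.e. there exists f ∈ B such that {T(t)f : t ≥ 0} is dense in B. -/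
open Filter Set

/-- If for a strongly continuous semigroup on a separable Banach space both the set `B₀` of
vectors whose orbit tends to `0` and the set `B_∞` of vectors approximately reachable from
arbitrarily small vectors are dense, then the semigroup has a dense orbit. -/
theorem dense_orbit_of_dense_B0_and_Binfty
    {B : Type*} [NormedAddCommGroup B] [NormedSpace ℝ B] [CompleteSpace B]
    [TopologicalSpace.SeparableSpace B]
    (T : ℝ → B →L[ℝ] B)
    (hT0 : T 0 = 1)
    (hTadd : ∀ s t : ℝ, 0 ≤ s → 0 ≤ t → T (s + t) = (T s).comp (T t))
    (hTcont : ∀ f : B, ContinuousOn (fun t => T t f) (Set.Ici (0 : ℝ)))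
    (h₀ : Dense {f : B | Tendsto (fun t : ℝ => T t f) atTop (nhds 0)})
    (hinf : Dense {f : B | ∀ ε : ℝ, 0 < ε →
      ∃ (g : B) (t : ℝ), 0 < t ∧ ‖g‖ < ε ∧ ‖T t g - f‖ < ε}) :
    ∃ f : B, Dense {y : B | ∃ t : ℝ, 0 ≤ t ∧ T t f = y} := by
  classical
  -- uniform bound on compact time intervals (Banach–Steinhaus)
  have hbound : ∀ τ : ℝ, ∃ C : ℝ, 0 ≤ C ∧ ∀ s ∈ Set.Icc (0:ℝ) τ, ‖T s‖ ≤ C := by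
    intro τ
    have hpt : ∀ x : B, ∃ C, ∀ s : Set.Icc (0:ℝ) τ, ‖T (s : ℝ) x‖ ≤ C := by
      intro x
      have hc : ContinuousOn (fun s => T s x) (Set.Icc (0:ℝ) τ) :=
        (hTcont x).mono (fun s hs => hs.1)
      obtain ⟨C, hC⟩ := (isCompact_Icc).exists_bound_of_continuousOn hc
      exact ⟨C, fun s => hC s s.2⟩
    obtain ⟨C, hC⟩ := banach_steinhaus (g := fun s : Set.Icc (0:ℝ) τ => T (s : ℝ)) hpt
    exact ⟨max C 0, le_max_right _ _, fun s hs => (hC ⟨s, hs⟩).trans (le_max_left _ _)⟩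
  obtain ⟨u, hu⟩ := TopologicalSpace.exists_dense_seq B
  set O : ℕ × ℕ → Set B :=
    fun p => {f | ∃ t : ℝ, 0 ≤ t ∧ ‖T t f - u p.1‖ < 1/((p.2:ℝ)+1)} with hO
  have hopen : ∀ p, IsOpen (O p) := by
    intro p
    rw [isOpen_iff_mem_nhds]
    rintro f ⟨t, ht, hft⟩
    have hc : Continuous fun g : B => ‖T t g - u p.1‖ :=
      ((T t).continuous.sub continuous_const).norm
    have hop : IsOpen {g : B | ‖T t g - u p.1‖ < 1/((p.2:ℝ)+1)} :=
      isOpen_lt hc continuous_const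
    exact Filter.mem_of_superset (hop.mem_nhds hft) (fun g hg => ⟨t, ht, hg⟩)
  have hdense : ∀ p, Dense (O p) := by
    intro p
    rw [Metric.dense_iff]
    intro f ε hε
    set y := u p.1 with hy
    set δ := 1/((p.2:ℝ)+1) with hδdef
    have hδ : 0 < δ := by positivity
    obtain ⟨f₀, hf₀ball, hf₀⟩ := Metric.dense_iff.mp h₀ f (ε/2) (by positivity)
    rw [Metric.mem_ball, dist_eq_norm] at hf₀ball
    simp only [Set.mem_setOf_eq] at hf₀
    by_cases hycase : ‖y‖ < δ/2
    · -- use f₀ alone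
      obtain ⟨N, hN⟩ := (Metric.tendsto_atTop.mp hf₀) (δ/2) (by positivity)
      refine ⟨f₀, ?_, max N 0, le_max_right _ _, ?_⟩
      · rw [Metric.mem_ball, dist_eq_norm]
        calc ‖f₀ - f‖ < ε/2 := hf₀ball
        _ ≤ ε := by linarith
      · have h1 := hN (max N 0) (le_max_left _ _)
        rw [dist_eq_norm, sub_zero] at h1
        calc ‖T (max N 0) f₀ - y‖ ≤ ‖T (max N 0) f₀‖ + ‖y‖ := norm_sub_le _ _
        _ < δ/2 + δ/2 := by linarith
        _ = δ := by ring
    · push_neg at hycase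
      obtain ⟨y', hy'ball, hy'⟩ := Metric.dense_iff.mp hinf y (δ/4) (by positivity)
      rw [Metric.mem_ball, dist_eq_norm] at hy'ball
      simp only [Set.mem_setOf_eq] at hy'
      have hy'pos : 0 < ‖y'‖ := by
        have := norm_sub_norm_le y' y
        rw [norm_sub_rev] at hy'ball
        nlinarith [norm_sub_norm_le y y']
      obtain ⟨N, hN⟩ := (Metric.tendsto_atTop.mp hf₀) (δ/4) (by positivity)
      set τ := max N 0 with hτ
      obtain ⟨C, hC0, hC⟩ := hbound τ
      set ε' := min (min (δ/4) (ε/2)) (‖y'‖/(2*(C+1))) with hε'def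
      have hε'pos : 0 < ε' := by
        apply lt_min (lt_min (by positivity) (by positivity))
        positivity
      obtain ⟨g, t, ht0, hg, hTg⟩ := hy' ε' hε'pos
      have hε'1 : ε' ≤ δ/4 := (min_le_left _ _).trans (min_le_left _ _)
      have hε'2 : ε' ≤ ε/2 := (min_le_left _ _).trans (min_le_right _ _)
      have hε'3 : ε' ≤ ‖y'‖/(2*(C+1)) := min_le_right _ _
      have htτ : τ < t := by
        by_contra hle
        push_neg at hle
        have hmem : t ∈ Set.Icc (0:ℝ) τ := ⟨le_of_lt ht0, hle⟩
        have h1 : ‖T t g‖ ≤ C * ‖g‖ :=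
          ((T t).le_opNorm g).trans (by
            apply mul_le_mul_of_nonneg_right (hC t hmem) (norm_nonneg _))
        have h2 : ‖y'‖ ≤ ‖T t g - y'‖ + ‖T t g‖ := by
          calc ‖y'‖ = ‖(y' - T t g) + T t g‖ := by rw [sub_add_cancel]
          _ ≤ ‖y' - T t g‖ + ‖T t g‖ := norm_add_le _ _
          _ = ‖T t g - y'‖ + ‖T t g‖ := by rw [norm_sub_rev]
        have hCg : C * ‖g‖ ≤ C * ε' := by
          apply mul_le_mul_of_nonneg_left (le_of_lt hg) hC0
        have : ‖y'‖ ≤ ε' + C * ε' := by linarith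
        have hlt : ε' + C * ε' < ‖y'‖ := by
          have h4 : ε' * (C + 1) ≤ ‖y'‖/2 := by
            have := mul_le_mul_of_nonneg_right hε'3 (by positivity : (0:ℝ) ≤ C + 1)
            calc ε' * (C+1) ≤ ‖y'‖/(2*(C+1)) * (C+1) := this
            _ = ‖y'‖/2 := by field_simp
          nlinarith
        linarith
      have htN : N ≤ t := le_of_lt (lt_of_le_of_lt (le_max_left N 0) htτ)
      have ht0' : (0:ℝ) ≤ t := le_of_lt ht0
      have hsm := hN t htN
      rw [dist_eq_norm, sub_zero] at hsm
      refine ⟨f₀ + g, ?_, t, ht0', ?_⟩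
      · rw [Metric.mem_ball, dist_eq_norm]
        calc ‖f₀ + g - f‖ = ‖(f₀ - f) + g‖ := by rw [add_sub_right_comm]
        _ ≤ ‖f₀ - f‖ + ‖g‖ := norm_add_le _ _
        _ < ε/2 + ε' := by linarith
        _ ≤ ε := by linarith
      · have hmap : T t (f₀ + g) = T t f₀ + T t g := map_add _ _ _
        calc ‖T t (f₀ + g) - y‖ = ‖T t f₀ + (T t g - y') + (y' - y)‖ := by
              rw [hmap]; congr 1; abel
        _ ≤ ‖T t f₀ + (T t g - y')‖ + ‖y' - y‖ := norm_add_le _ _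
        _ ≤ ‖T t f₀‖ + ‖T t g - y'‖ + ‖y' - y‖ := by
              have := norm_add_le (T t f₀) (T t g - y')
              linarith
        _ < δ/4 + δ/4 + δ/4 := by linarith
        _ < δ := by linarith
  have hD : Dense (⋂ p, O p) := dense_iInter_of_isOpen hopen hdense
  obtain ⟨f, hf⟩ := hD.nonempty
  refine ⟨f, ?_⟩
  rw [Metric.dense_iff]
  intro x r hr
  obtain ⟨n, hn⟩ := Metric.denseRange_iff.mp hu x (r/2) (by positivity)
  obtain ⟨k, hk⟩ := exists_nat_one_div_lt (show (0:ℝ) < r/2 by positivity)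
  have hfp : f ∈ O (n, k) := Set.mem_iInter.mp hf (n, k)
  obtain ⟨t, ht, hft⟩ := hfp
  refine ⟨T t f, ?_, t, ht, rfl⟩
  rw [Metric.mem_ball, dist_eq_norm]
  have : ‖T t f - x‖ ≤ ‖T t f - u n‖ + ‖u n - x‖ := by
    have := norm_add_le (T t f - u n) (u n - x)
    simpa using this
  have hnx : ‖u n - x‖ < r/2 := by rwa [dist_comm, dist_eq_norm] at hn
  have hk' : ‖T t f - u n‖ < r/2 := lt_trans hft hk
  linarith
end

section
/- Chaotic strongly continuous semigroups exist only on infinite-dimensional Banach spaces: if B is a complex Banach space with 0 < dim B < ∞, then no strongly continuous semigroup on B is chaotic. -/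
/-!
Put `S = T 1` and `K = {T r f | r ∈ [0, 1]}`, a compact set. Writing `t = ⌊t⌋ + r`, the orbit of
`f` lies in `⋃ₙ Sⁿ K`. If `0 ∈ K` the orbit is eventually `0`, so it is contained in the bounded
set `K`. Otherwise, if `S` has a spectral value `μ` with `‖μ‖ ≤ 1`, there is (in finite dimension)
a nonzero functional `φ` with `φ ∘ S = μ φ`; it is bounded on `⋃ₙ Sⁿ K`, yet it maps a dense set
onto a dense subset of `ℂ`. If every spectral value has `‖μ‖ > 1`, Gelfand's formula makes the
powers of `S⁻¹` bounded, so `⋃ₙ Sⁿ K` stays away from `0`.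
-/

open Filter Set Bornology Topology

theorem Bornology.IsBounded.not_dense {X : Type*} [PseudoMetricSpace X] [NeBot (cobounded X)]
    {s : Set X} (hs : IsBounded s) : ¬ Dense s := fun hd => by
  have hbdd := hs.closure
  rw [hd.closure_eq, isBounded_univ, ← cobounded_eq_bot_iff] at hbdd
  exact NeBot.ne' hbdd

theorem spectrum.tendsto_pow_atTop_nhds_zero_of_spectralRadius_lt_one {A : Type*} [NormedRing A]
    [NormedAlgebra ℂ A] [CompleteSpace A] {a : A} (ha : spectralRadius ℂ a < 1) :
    Tendsto (a ^ ·) atTop (𝓝 0) := by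
  obtain ⟨r, hρr, hr1⟩ := ENNReal.lt_iff_exists_nnreal_btwn.mp ha
  have hle : ∀ᶠ n : ℕ in atTop, ‖a ^ n‖ ≤ (r : ℝ) ^ n := by
    filter_upwards [(pow_nnnorm_pow_one_div_tendsto_nhds_spectralRadius a).eventually_lt_const hρr,
      eventually_gt_atTop 0] with n hn hn0
    rw [one_div, ENNReal.rpow_inv_lt_iff (by positivity), ENNReal.rpow_natCast] at hn
    exact_mod_cast hn.le
  exact squeeze_zero_norm' hle
    (tendsto_pow_atTop_nhds_zero_of_lt_one r.coe_nonneg (by exact_mod_cast hr1))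

theorem Module.End.exists_dual_comp_eq_smul_of_mem_spectrum {K V : Type*} [Field K]
    [AddCommGroup V] [Module K V] [FiniteDimensional K V] {f : Module.End K V} {μ : K}
    (hμ : μ ∈ spectrum K f) : ∃ φ : Module.Dual K V, φ ≠ 0 ∧ φ ∘ₗ f = μ • φ := by
  set g : Module.End K V := algebraMap K _ μ - f
  have hg : ¬ Function.Surjective g := fun hs => spectrum.mem_iff.mp hμ
    ((Module.End.isUnit_iff g).mpr ⟨LinearMap.injective_iff_surjective.mpr hs, hs⟩)
  rw [← LinearMap.dualMap_injective_iff, ← LinearMap.ker_eq_bot] at hg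
  obtain ⟨φ, hφ, hφ0⟩ := (Submodule.ne_bot_iff _).mp hg
  refine ⟨φ, hφ0, LinearMap.ext fun x => ?_⟩
  have hx := LinearMap.congr_fun (LinearMap.mem_ker.mp hφ) x
  simp only [g, LinearMap.dualMap_apply, LinearMap.sub_apply, Module.algebraMap_end_apply,
    map_sub, map_smul, LinearMap.zero_apply, sub_eq_zero] at hx
  exact hx.symm

theorem map_natCast_add_eq_pow_mul {M : Type*} [Monoid M] {T : ℝ → M}
    (hT : ∀ s t : ℝ, 0 ≤ s → 0 ≤ t → T (s + t) = T s * T t) (n : ℕ) {r : ℝ} (hr : 0 ≤ r) :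
    T (n + r) = T 1 ^ n * T r := by
  induction n with
  | zero => simp
  | succ n ih =>
    rw [show ((n + 1 : ℕ) : ℝ) + r = 1 + (n + r) by push_cast; ring,
      hT 1 _ zero_le_one (by positivity), ih, pow_succ', mul_assoc]

section

variable {B : Type*} [NormedAddCommGroup B] [NormedSpace ℂ B]

theorem ContinuousLinearMap.exists_norm_le_mul_norm_pow_apply [CompleteSpace B] [Nontrivial B]
    {S : B →L[ℂ] B} (hS : ∀ μ ∈ spectrum ℂ S, 1 < ‖μ‖) :
    ∃ C > 0, ∀ (n : ℕ) (x : B), ‖x‖ ≤ C * ‖(S ^ n) x‖ := by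
  have hunit : IsUnit S := (spectrum.zero_notMem_iff ℂ).mp fun h => by
    have := hS 0 h
    norm_num at this
  set R : B →L[ℂ] B := ↑hunit.unit⁻¹
  have hR : spectralRadius ℂ R < 1 := by
    refine spectrum.spectralRadius_lt_of_forall_lt R fun z hz => ?_
    rw [← spectrum.map_inv, IsUnit.unit_spec, Set.mem_inv] at hz
    have := hS _ hz
    rw [norm_inv, one_lt_inv_iff₀] at this
    exact_mod_cast this.2
  obtain ⟨C, hC, hCR⟩ := (Metric.isBounded_range_of_tendsto _
    (spectrum.tendsto_pow_atTop_nhds_zero_of_spectralRadius_lt_one hR)).exists_pos_norm_le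
  refine ⟨C, hC, fun n x => ?_⟩
  have hRS : R ^ n * S ^ n = 1 := by
    rw [← IsUnit.unit_spec hunit, ← Units.val_pow_eq_pow_val, ← Units.val_pow_eq_pow_val,
      ← Units.val_mul, inv_pow, inv_mul_cancel, Units.val_one]
  calc ‖x‖ = ‖(R ^ n * S ^ n) x‖ := by rw [hRS]; rfl
    _ ≤ ‖R ^ n‖ * ‖(S ^ n) x‖ := (R ^ n).le_opNorm _
    _ ≤ C * ‖(S ^ n) x‖ := by gcongr; exact hCR _ ⟨n, rfl⟩

theorem ContinuousLinearMap.apply_pow_apply_eq_pow_mul {φ : B →L[ℂ] ℂ} {S : B →L[ℂ] B} {μ : ℂ}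
    (hφ : ∀ x, φ (S x) = μ * φ x) (n : ℕ) (x : B) : φ ((S ^ n) x) = μ ^ n * φ x := by
  induction n generalizing x with
  | zero => simp
  | succ n ih => rw [pow_succ, mul_apply_eq_comp, ih, hφ, pow_succ, mul_assoc]

theorem not_dense_iUnion_pow_image_of_norm_le_one [FiniteDimensional ℂ B] {S : B →L[ℂ] B}
    {μ : ℂ} (hμ : μ ∈ spectrum ℂ S) (hμ1 : ‖μ‖ ≤ 1) {K : Set B} (hK : IsBounded K) :
    ¬ Dense (⋃ n : ℕ, (S ^ n) '' K) := by
  have : CompleteSpace B := FiniteDimensional.complete ℂ B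
  rw [ContinuousLinearMap.spectrum_eq] at hμ
  obtain ⟨φ₀, hφ₀, hφS⟩ := Module.End.exists_dual_comp_eq_smul_of_mem_spectrum hμ
  set φ : B →L[ℂ] ℂ := LinearMap.toContinuousLinearMap φ₀
  have hφ : ∀ (n : ℕ) (x : B), φ ((S ^ n) x) = μ ^ n * φ x :=
    ContinuousLinearMap.apply_pow_apply_eq_pow_mul fun x => LinearMap.congr_fun hφS x
  obtain ⟨R, hR⟩ := isBounded_iff_forall_norm_le.mp hK
  have hbdd : IsBounded (φ '' ⋃ n : ℕ, (S ^ n) '' K) := by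
    refine isBounded_iff_forall_norm_le.mpr ⟨‖φ‖ * R, ?_⟩
    rintro _ ⟨_, ⟨_, ⟨n, rfl⟩, x, hx, rfl⟩, rfl⟩
    calc ‖φ ((S ^ n) x)‖ = ‖μ‖ ^ n * ‖φ x‖ := by rw [hφ, norm_mul, norm_pow]
      _ ≤ 1 * (‖φ‖ * R) := by
        gcongr
        · exact pow_le_one₀ (norm_nonneg μ) hμ1
        · exact φ.le_opNorm_of_le (hR x hx)
      _ = ‖φ‖ * R := one_mul _
  have hsurj : Function.Surjective φ := LinearMap.surjective_of_ne_zero hφ₀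
  exact fun hd => hbdd.not_dense (hsurj.denseRange.dense_image φ.continuous hd)

theorem not_dense_iUnion_pow_image_of_one_lt_norm [CompleteSpace B] [Nontrivial B]
    {S : B →L[ℂ] B} (hS : ∀ μ ∈ spectrum ℂ S, 1 < ‖μ‖) {K : Set B} (hK : IsClosed K)
    (hK0 : (0 : B) ∉ K) : ¬ Dense (⋃ n : ℕ, (S ^ n) '' K) := by
  obtain ⟨C, hC, hSC⟩ := ContinuousLinearMap.exists_norm_le_mul_norm_pow_apply hS
  obtain ⟨ε, hε, hεK⟩ := Metric.mem_nhds_iff.mp (hK.isOpen_compl.mem_nhds hK0)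
  intro hd
  obtain ⟨_, ⟨_, ⟨n, rfl⟩, x, hx, rfl⟩, hdist⟩ := hd.exists_dist_lt 0 (div_pos hε hC)
  have hxε : ε ≤ ‖x‖ := by
    by_contra! h
    exact hεK (mem_ball_zero_iff.mpr h) hx
  rw [dist_zero_left, lt_div_iff₀ hC] at hdist
  linarith [hSC n x]

theorem not_dense_iUnion_pow_image [FiniteDimensional ℂ B] [Nontrivial B] (S : B →L[ℂ] B)
    {K : Set B} (hK : IsCompact K) (hK0 : (0 : B) ∉ K) : ¬ Dense (⋃ n : ℕ, (S ^ n) '' K) := by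
  have : CompleteSpace B := FiniteDimensional.complete ℂ B
  by_cases h : ∃ μ ∈ spectrum ℂ S, ‖μ‖ ≤ 1
  · obtain ⟨μ, hμ, hμ1⟩ := h
    exact not_dense_iUnion_pow_image_of_norm_le_one hμ hμ1 hK.isBounded
  · push Not at h
    exact not_dense_iUnion_pow_image_of_one_lt_norm h hK.isClosed hK0

section Semigroup

variable {T : ℝ → B →L[ℂ] B}

theorem orbit_subset_iUnion_pow_image
    (hTadd : ∀ s t : ℝ, 0 ≤ s → 0 ≤ t → T (s + t) = (T s).comp (T t)) (f : B) :
    {y : B | ∃ t : ℝ, 0 ≤ t ∧ T t f = y} ⊆ ⋃ n : ℕ, (T 1 ^ n) '' ((T · f) '' Icc 0 1) := by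
  rintro _ ⟨t, ht, rfl⟩
  have hfract : 0 ≤ t - ⌊t⌋₊ := sub_nonneg.mpr (Nat.floor_le ht)
  refine mem_iUnion.mpr ⟨⌊t⌋₊, T (t - ⌊t⌋₊) f,
    ⟨t - ⌊t⌋₊, ⟨hfract, by linarith [Nat.lt_floor_add_one t]⟩, rfl⟩, ?_⟩
  rw [← mul_apply_eq_comp, ← map_natCast_add_eq_pow_mul hTadd _ hfract, add_sub_cancel]

theorem orbit_subset_image_Icc_of_apply_eq_zero
    (hTadd : ∀ s t : ℝ, 0 ≤ s → 0 ≤ t → T (s + t) = (T s).comp (T t)) {f : B} {r : ℝ}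
    (hr : 0 ≤ r) (hr0 : T r f = 0) :
    {y : B | ∃ t : ℝ, 0 ≤ t ∧ T t f = y} ⊆ (T · f) '' Icc 0 r := by
  rintro _ ⟨t, ht, rfl⟩
  rcases le_or_gt t r with htr | hrt
  · exact ⟨t, ⟨ht, htr⟩, rfl⟩
  · refine ⟨r, ⟨hr, le_rfl⟩, ?_⟩
    change T r f = T t f
    rw [hr0, ← sub_add_cancel t r, hTadd _ _ (by linarith) hr, ContinuousLinearMap.comp_apply,
      hr0, map_zero]

end Semigroup

end

theorem no_chaotic_semigroup_on_finite_dimensional_general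
    {B : Type*} [NormedAddCommGroup B] [NormedSpace ℂ B]
    [Nontrivial B] [FiniteDimensional ℂ B]
    (T : ℝ → B →L[ℂ] B)
    (hTadd : ∀ s t : ℝ, 0 ≤ s → 0 ≤ t → T (s + t) = (T s).comp (T t))
    (hTcont : ∀ f : B, ContinuousOn (fun t => T t f) (Set.Ici (0 : ℝ))) :
    ¬ ((∃ f : B, Dense {y : B | ∃ t : ℝ, 0 ≤ t ∧ T t f = y}) ∧
        Dense {f : B | ∃ t : ℝ, 0 < t ∧ T t f = f}) := by
  rintro ⟨⟨f, hf⟩, -⟩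
  have hK : IsCompact ((T · f) '' Icc 0 1) :=
    isCompact_Icc.image_of_continuousOn ((hTcont f).mono Icc_subset_Ici_self)
  by_cases hK0 : (0 : B) ∈ (T · f) '' Icc 0 1
  · obtain ⟨r, ⟨hr, hr1⟩, hr0⟩ := hK0
    have hsub := (orbit_subset_image_Icc_of_apply_eq_zero hTadd hr hr0).trans
      (image_mono (Icc_subset_Icc_right hr1))
    exact (hK.isBounded.subset hsub).not_dense hf
  · exact not_dense_iUnion_pow_image (T 1) hK hK0 (hf.mono (orbit_subset_iUnion_pow_image hTadd f))

/-- Chaotic strongly continuous semigroups exist only on infinite-dimensional Banach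
spaces: on a non-zero finite-dimensional complex Banach space no strongly continuous
semigroup is chaotic. -/
theorem no_chaotic_semigroup_on_finite_dimensional
    {B : Type*} [NormedAddCommGroup B] [NormedSpace ℂ B]
    [Nontrivial B] [FiniteDimensional ℂ B]
    (T : ℝ → B →L[ℂ] B)
    (hT0 : T 0 = 1)
    (hTadd : ∀ s t : ℝ, 0 ≤ s → 0 ≤ t → T (s + t) = (T s).comp (T t))
    (hTcont : ∀ f : B, ContinuousOn (fun t => T t f) (Set.Ici (0 : ℝ))) :
    ¬ ((∃ f : B, Dense {y : B | ∃ t : ℝ, 0 ≤ t ∧ T t f = y}) ∧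
        Dense {f : B | ∃ t : ℝ, 0 < t ∧ T t f = f}) :=
  no_chaotic_semigroup_on_finite_dimensional_general T hTadd hTcont
end

section
/- (Banasiak–Moszyński criterion.) Let (T(t))_{t≥0} be a strongly continuous semigroup on a separable complex Banach space B. Assume there exist an open connected set Ω ⊆ ℂ with Ω ∩ iℝ ≠ ∅ and a map F : Ω → B, not identically zero, such that: (a) T(t)F(λ) = e^{λt}F(λ) for all λ ∈ Ω and all t ≥ 0; (b) for every continuous linear functional φ ∈ B′ the map λ ↦ φ(F(λ)) is holomorphic on Ω. Then T is subspace chaotic; more precisely, the closed linear span V of {F(λ) : λ ∈ Ω} is a non-zero closed subspace of B satisfying T(t)V ⊆ V for all t ≥ 0, and the restriction of T to V is chaotic on V: there exists f ∈ V whose orbit {T(t)f : t ≥ 0} is dense in V, and the set {f ∈ V : ∃ t > 0 with T(t)f = f} is dense in V. -/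
open Filter Set Topology

/-!
Eigenvectors `F λ` with `Re λ < 0` have orbits tending to `0`; those with `Re λ > 0` have
preimages `e^{-λt} F λ` under `T t` tending to `0`; those with `λ = i q`, `q ∈ ℚ`, are all fixed
by `T (2π n!)` once `n` is large. Each of these three sets of eigenvalues accumulates at the point
of `Ω ∩ iℝ`, so by Hahn–Banach and the identity theorem each family spans a dense subspace of `V`.
A decaying vector plus a small backward preimage of a target shows that `T` is topologically
transitive on `V`, hence has a dense orbit by Baire's theorem (Birkhoff), and the third family
consists of periodic points.
-/

theorem exists_denseRange_orbit_of_transitive {X ι : Type*} [TopologicalSpace X] [BaireSpace X]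
    [SecondCountableTopology X] [Nonempty X] (f : ι → X → X) (hf : ∀ i, Continuous (f i))
    (htrans : ∀ U W : Set X, IsOpen U → IsOpen W → U.Nonempty → W.Nonempty →
      ∃ i, (U ∩ f i ⁻¹' W).Nonempty) :
    ∃ x, DenseRange fun i => f i x := by
  obtain ⟨b, hbc, hbne, hb⟩ := TopologicalSpace.exists_countable_basis X
  have hopen : ∀ W ∈ b, IsOpen (⋃ i, f i ⁻¹' W) := fun W hW =>
    isOpen_iUnion fun i => (hb.isOpen hW).preimage (hf i)
  have hdense : ∀ W ∈ b, Dense (⋃ i, f i ⁻¹' W) := by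
    refine fun W hW => dense_iff_inter_open.2 fun U hU hUne => ?_
    obtain ⟨i, x, hx⟩ := htrans U W hU (hb.isOpen hW) hUne
      (nonempty_iff_ne_empty.2 fun h => hbne (h ▸ hW))
    exact ⟨x, hx.1, mem_iUnion_of_mem i hx.2⟩
  obtain ⟨x, hx⟩ := (dense_biInter_of_isOpen hopen hbc hdense).nonempty
  refine ⟨x, dense_iff_inter_open.2 fun W hW ⟨y, hy⟩ => ?_⟩
  obtain ⟨W', hW'b, -, hW'W⟩ := hb.exists_subset_of_mem_open hy hW
  obtain ⟨i, hi⟩ := mem_iUnion.1 (mem_iInter₂.1 hx W' hW'b)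
  exact ⟨f i x, hW'W hi, i, rfl⟩

theorem exists_dual_vanishing_of_notMem_topologicalClosure {𝕜 B : Type*} [RCLike 𝕜]
    [NormedAddCommGroup B] [NormedSpace 𝕜 B] {M : Submodule 𝕜 B} {x : B}
    (hx : x ∉ M.topologicalClosure) :
    ∃ φ : B →L[𝕜] 𝕜, (∀ y ∈ M, φ y = 0) ∧ φ x ≠ 0 := by
  set N := M.topologicalClosure
  have : IsClosed (N : Set B) := M.isClosed_topologicalClosure
  obtain ⟨g, hg⟩ := SeparatingDual.exists_ne_zero (R := 𝕜)
    (mt (Submodule.Quotient.mk_eq_zero N).1 hx)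
  refine ⟨g.comp N.mkQL, fun y hy => ?_, hg⟩
  simp [(Submodule.Quotient.mk_eq_zero N).2 (M.le_topologicalClosure hy)]

theorem Complex.frequently_rat_mul_I {z₀ : ℂ} (hz₀ : z₀.re = 0) :
    ∃ᶠ z in 𝓝[≠] z₀, ∃ q : ℚ, z = q * I := by
  obtain ⟨b, rfl⟩ : ∃ b : ℝ, z₀ = b * I := ⟨z₀.im, ext (by simp [hz₀]) (by simp)⟩
  have hlin : Tendsto (fun x : ℝ => (x : ℂ) * I) (𝓝[≠] b) (𝓝[≠] (b * I)) :=
    ((hasDerivAt_id b).ofReal_comp.mul_const I).tendsto_nhdsNE (by simp)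
  have hrat : ∃ᶠ x in 𝓝[≠] b, x ∈ range ((↑) : ℚ → ℝ) :=
    mem_closure_ne_iff_frequently_within.1 (Rat.denseRange_cast.sdiff_singleton b b)
  exact hlin.frequently (hrat.mono fun x ⟨q, hq⟩ => ⟨q, by simp [← hq]⟩)

theorem Complex.tendsto_add_ofReal_nhdsNE (z₀ : ℂ) :
    Tendsto (fun x : ℝ => z₀ + x) (𝓝[≠] 0) (𝓝[≠] z₀) := by
  simpa using ((hasDerivAt_id (0 : ℝ)).ofReal_comp.const_add z₀).tendsto_nhdsNE one_ne_zero

theorem Complex.frequently_re_lt (z₀ : ℂ) : ∃ᶠ z in 𝓝[≠] z₀, z.re < z₀.re :=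
  (tendsto_add_ofReal_nhdsNE z₀).frequently <| frequently_nhdsWithin_iff.2 <|
    (frequently_lt_nhds 0).mono fun x hx => ⟨by simpa using hx, hx.ne⟩

theorem Complex.frequently_lt_re (z₀ : ℂ) : ∃ᶠ z in 𝓝[≠] z₀, z₀.re < z.re :=
  (tendsto_add_ofReal_nhdsNE z₀).frequently <| frequently_nhdsWithin_iff.2 <|
    (frequently_gt_nhds 0).mono fun x hx => ⟨by simpa using hx, hx.ne'⟩

theorem Complex.tendsto_exp_mul_ofReal_atTop {z : ℂ} (hz : z.re < 0) :
    Tendsto (fun t : ℝ => exp (z * t)) atTop (𝓝 0) :=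
  tendsto_exp_nhds_zero_iff.2 <| by simpa using tendsto_id.const_mul_atTop_of_neg hz

theorem Complex.eventually_exp_rat_mul_I_mul_two_pi_factorial (q : ℚ) :
    ∀ᶠ n : ℕ in atTop, exp (q * I * (2 * Real.pi * n.factorial : ℝ)) = 1 := by
  filter_upwards [eventually_ge_atTop q.den] with n hn
  obtain ⟨c, hc⟩ := Nat.dvd_factorial q.pos hn
  have hint : (q : ℂ) * n.factorial = (q.num * c : ℤ) := by
    have : q * n.factorial = q.num * c := by
      rw [hc, Nat.cast_mul, ← mul_assoc, q.mul_den_eq_num]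
    exact_mod_cast this
  rw [← exp_int_mul_two_pi_mul_I (q.num * c), ← hint]
  push_cast
  ring_nf

section OrbitSubmodules

variable {𝕜 B ι : Type*} [NormedField 𝕜] [NormedAddCommGroup B] [NormedSpace 𝕜 B]

def decaySubmodule (T : ι → B →L[𝕜] B) (l : Filter ι) : Submodule 𝕜 B where
  carrier := {x | Tendsto (fun i => T i x) l (𝓝 0)}
  add_mem' hx hy := by simpa using hx.add hy
  zero_mem' := by simpa using tendsto_const_nhds
  smul_mem' c _ hx := by simpa using hx.const_smul c

def backwardDecaySubmodule (T : ι → B →L[𝕜] B) (l : Filter ι) (W : Submodule 𝕜 B) :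
    Submodule 𝕜 B where
  carrier := {y | ∃ s : ι → B, Tendsto s l (𝓝 0) ∧ ∀ᶠ i in l, s i ∈ W ∧ T i (s i) = y}
  add_mem' := by
    rintro a b ⟨s, hs0, hs⟩ ⟨s', hs'0, hs'⟩
    refine ⟨fun i => s i + s' i, by simpa using hs0.add hs'0, (hs.and hs').mono ?_⟩
    rintro i ⟨⟨hsW, rfl⟩, ⟨hs'W, rfl⟩⟩
    exact ⟨W.add_mem hsW hs'W, map_add _ _ _⟩
  zero_mem' := ⟨0, tendsto_const_nhds, Eventually.of_forall fun _ => ⟨W.zero_mem, map_zero _⟩⟩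
  smul_mem' := by
    rintro c y ⟨s, hs0, hs⟩
    refine ⟨fun i => c • s i, by simpa using hs0.const_smul c, hs.mono ?_⟩
    rintro i ⟨hsW, rfl⟩
    exact ⟨W.smul_mem c hsW, map_smul _ _ _⟩

def eventuallyFixedSubmodule (T : ι → B →L[𝕜] B) (l : Filter ι) : Submodule 𝕜 B where
  carrier := {x | ∀ᶠ i in l, T i x = x}
  add_mem' hx hy := (hx.and hy).mono fun i ⟨hx, hy⟩ => by rw [map_add, hx, hy]
  zero_mem' := Eventually.of_forall fun i => map_zero _
  smul_mem' c _ hx := hx.mono fun i hx => by rw [map_smul, hx]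

variable {T : ι → B →L[𝕜] B} {l : Filter ι}

theorem exists_tendsto_add_of_mem_decay_of_mem_backwardDecay {W : Submodule 𝕜 B} {x y : B}
    (hx : x ∈ decaySubmodule T l) (hy : y ∈ backwardDecaySubmodule T l W) :
    ∃ s : ι → B, (∀ᶠ i in l, s i ∈ W) ∧ Tendsto (fun i => x + s i) l (𝓝 x) ∧
      Tendsto (fun i => T i (x + s i)) l (𝓝 y) := by
  obtain ⟨s, hs0, hs⟩ := hy
  refine ⟨s, hs.mono fun _ h => h.1, by simpa using tendsto_const_nhds.add hs0, ?_⟩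
  have hTx : Tendsto (fun i => T i x + y) l (𝓝 y) := by simpa using hx.add_const y
  exact hTx.congr' (hs.mono fun i h => by simp only [map_add, h.2])

end OrbitSubmodules

section Chaos

variable {𝕜 B : Type*} [NormedField 𝕜] [NormedAddCommGroup B] [NormedSpace 𝕜 B]
  {T : ℝ → B →L[𝕜] B} {V : Submodule 𝕜 B}

theorem exists_dense_orbit_of_le_topologicalClosure [CompleteSpace B]
    [TopologicalSpace.SeparableSpace B] (hV : IsClosed (V : Set B))
    (hTV : ∀ t, 0 ≤ t → ∀ x ∈ V, T t x ∈ V)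
    (hdecay : V ≤ (V ⊓ decaySubmodule T atTop).topologicalClosure)
    (hbackward : V ≤ (backwardDecaySubmodule T atTop V).topologicalClosure) :
    ∃ f ∈ V, ∀ g ∈ V, ∀ ε : ℝ, 0 < ε → ∃ t : ℝ, 0 ≤ t ∧ ‖T t f - g‖ < ε := by
  have : CompleteSpace V := hV.completeSpace_coe
  let orbit : Ici (0 : ℝ) → V → V := fun t v => ⟨T t v, hTV t t.2 v v.2⟩
  have htrans : ∀ U W : Set V, IsOpen U → IsOpen W → U.Nonempty → W.Nonempty →
      ∃ t, (U ∩ orbit t ⁻¹' W).Nonempty := by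
    rintro U W hU hW ⟨u, hu⟩ ⟨w, hw⟩
    obtain ⟨U', hU', rfl⟩ := isOpen_induced_iff.1 hU
    obtain ⟨W', hW', rfl⟩ := isOpen_induced_iff.1 hW
    obtain ⟨x, hxU, hxV, hx⟩ := mem_closure_iff.1 (hdecay u.2) U' hU' hu
    obtain ⟨y, hyW, hy⟩ := mem_closure_iff.1 (hbackward w.2) W' hW' hw
    obtain ⟨s, hsV, hxs, hTxs⟩ := exists_tendsto_add_of_mem_decay_of_mem_backwardDecay hx hy
    obtain ⟨t, hstV, hxsU, hTxsW, ht⟩ := (hsV.and <| (hxs.eventually (hU'.mem_nhds hxU)).and <|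
      (hTxs.eventually (hW'.mem_nhds hyW)).and (eventually_ge_atTop 0)).exists
    exact ⟨⟨t, ht⟩, ⟨x + s t, V.add_mem hxV hstV⟩, hxsU, hTxsW⟩
  obtain ⟨f, hf⟩ := exists_denseRange_orbit_of_transitive orbit
    (fun t => ((T t).continuous.comp continuous_subtype_val).subtype_mk _) htrans
  refine ⟨f, f.2, fun g hg ε hε => ?_⟩
  obtain ⟨t, ht⟩ := Metric.denseRange_iff.1 hf ⟨g, hg⟩ ε hε
  exact ⟨t, t.2, by rwa [Subtype.dist_eq, dist_comm, dist_eq_norm] at ht⟩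

theorem exists_periodic_near_of_le_topologicalClosure {τ : ℕ → ℝ} (hτ : ∀ n, 0 < τ n)
    (hfixed : V ≤ (V ⊓ eventuallyFixedSubmodule (fun n => T (τ n)) atTop).topologicalClosure) :
    ∀ g ∈ V, ∀ ε : ℝ, 0 < ε → ∃ f ∈ V, (∃ t : ℝ, 0 < t ∧ T t f = f) ∧ ‖f - g‖ < ε := by
  intro g hg ε hε
  obtain ⟨f, ⟨hfV, hf⟩, hfg⟩ := Metric.mem_closure_iff.1 (hfixed hg) ε hε
  obtain ⟨n, hn⟩ := hf.exists
  exact ⟨f, hfV, ⟨τ n, hτ n, hn⟩, by rwa [dist_comm, dist_eq_norm] at hfg⟩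

end Chaos

section ComplexEigenvectors

variable {B : Type*} [NormedAddCommGroup B] [NormedSpace ℂ B]

theorem topologicalClosure_span_image_inter_eq {Ω S : Set ℂ} {F : ℂ → B} (hΩ : IsOpen Ω)
    (hΩc : IsPreconnected Ω) (hF : ∀ φ : B →L[ℂ] ℂ, DifferentiableOn ℂ (fun z => φ (F z)) Ω)
    {z₀ : ℂ} (hz₀ : z₀ ∈ Ω) (hS : ∃ᶠ z in 𝓝[≠] z₀, z ∈ S) :
    (Submodule.span ℂ (F '' (Ω ∩ S))).topologicalClosure =
      (Submodule.span ℂ (F '' Ω)).topologicalClosure := by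
  refine le_antisymm (Submodule.topologicalClosure_mono
    (Submodule.span_mono (image_mono inter_subset_left))) ?_
  refine Submodule.topologicalClosure_minimal _ ?_ (Submodule.isClosed_topologicalClosure _)
  rw [Submodule.span_le]
  rintro - ⟨w, hw, rfl⟩
  by_contra hFw
  obtain ⟨φ, hφS, hφw⟩ := exists_dual_vanishing_of_notMem_topologicalClosure hFw
  have hzero : ∃ᶠ z in 𝓝[≠] z₀, φ (F z) = 0 := by
    have hΩnhds : ∀ᶠ z in 𝓝[≠] z₀, z ∈ Ω := eventually_nhdsWithin_of_eventually_nhds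
      (hΩ.mem_nhds hz₀)
    refine (hS.and_eventually hΩnhds).mono fun z ⟨hzS, hzΩ⟩ => ?_
    exact hφS _ (Submodule.subset_span ⟨z, ⟨hzΩ, hzS⟩, rfl⟩)
  exact hφw <| ((hF φ).analyticOnNhd hΩ).eqOn_zero_of_preconnected_of_frequently_eq_zero
    hΩc hz₀ hzero hw

theorem span_image_mem_invtSubmodule {Ω : Set ℂ} {F : ℂ → B} {A : B →L[ℂ] B}
    (hF : ∀ z ∈ Ω, ∃ c : ℂ, A (F z) = c • F z) :
    Submodule.span ℂ (F '' Ω) ∈ Module.End.invtSubmodule (A : B →ₗ[ℂ] B) := by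
  rw [Module.End.mem_invtSubmodule_iff_map_le, Submodule.map_span_le]
  rintro - ⟨z, hz, rfl⟩
  obtain ⟨c, hc⟩ := hF z hz
  rw [ContinuousLinearMap.coe_coe, hc]
  exact Submodule.smul_mem _ c (Submodule.subset_span (mem_image_of_mem F hz))

variable {T : ℝ → B →L[ℂ] B} {z : ℂ} {x : B}

theorem mem_decaySubmodule_of_eigen (hx : ∀ t : ℝ, 0 ≤ t → T t x = Complex.exp (z * t) • x)
    (hz : z.re < 0) : x ∈ decaySubmodule T atTop := by
  have h : Tendsto (fun t : ℝ => Complex.exp (z * t) • x) atTop (𝓝 0) := by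
    simpa using (Complex.tendsto_exp_mul_ofReal_atTop hz).smul_const x
  exact h.congr' <| (eventually_ge_atTop 0).mono fun t ht => (hx t ht).symm

theorem mem_backwardDecaySubmodule_of_eigen {W : Submodule ℂ B}
    (hx : ∀ t : ℝ, 0 ≤ t → T t x = Complex.exp (z * t) • x) (hz : 0 < z.re) (hxW : x ∈ W) :
    x ∈ backwardDecaySubmodule T atTop W := by
  refine ⟨fun t => Complex.exp (-z * t) • x, ?_, ?_⟩
  · have hz' : (-z).re < 0 := by simpa using hz
    simpa using (Complex.tendsto_exp_mul_ofReal_atTop hz').smul_const x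
  · filter_upwards [eventually_ge_atTop 0] with t ht
    refine ⟨W.smul_mem _ hxW, ?_⟩
    rw [map_smul, hx t ht, smul_smul, ← Complex.exp_add, neg_mul, neg_add_cancel,
      Complex.exp_zero, one_smul]

theorem mem_eventuallyFixedSubmodule_of_eigen {q : ℚ}
    (hx : ∀ t : ℝ, 0 ≤ t → T t x = Complex.exp (q * Complex.I * t) • x) :
    x ∈ eventuallyFixedSubmodule (fun n : ℕ => T (2 * Real.pi * n.factorial)) atTop := by
  filter_upwards [Complex.eventually_exp_rat_mul_I_mul_two_pi_factorial q] with n hn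
  rw [hx _ (by positivity), hn, one_smul]

end ComplexEigenvectors

theorem banasiak_moszynski_criterion_general
    {B : Type*} [NormedAddCommGroup B] [NormedSpace ℂ B] [CompleteSpace B]
    [TopologicalSpace.SeparableSpace B]
    (T : ℝ → B →L[ℂ] B)
    (Ω : Set ℂ) (hΩopen : IsOpen Ω) (hΩconn : IsConnected Ω)
    (hΩim : ∃ z ∈ Ω, z.re = 0)
    (F : ℂ → B)
    (hFne : ∃ z ∈ Ω, F z ≠ 0)
    (hFeig : ∀ z ∈ Ω, ∀ t : ℝ, 0 ≤ t → T t (F z) = Complex.exp (z * t) • F z)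
    (hFhol : ∀ φ : B →L[ℂ] ℂ, DifferentiableOn ℂ (fun z => φ (F z)) Ω) :
    (Submodule.span ℂ (F '' Ω)).topologicalClosure ≠ ⊥ ∧
    (∀ t : ℝ, 0 ≤ t → ∀ x ∈ (Submodule.span ℂ (F '' Ω)).topologicalClosure,
      T t x ∈ (Submodule.span ℂ (F '' Ω)).topologicalClosure) ∧
    (∃ f ∈ (Submodule.span ℂ (F '' Ω)).topologicalClosure,
      ∀ g ∈ (Submodule.span ℂ (F '' Ω)).topologicalClosure,
        ∀ ε : ℝ, 0 < ε → ∃ t : ℝ, 0 ≤ t ∧ ‖T t f - g‖ < ε) ∧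
    (∀ g ∈ (Submodule.span ℂ (F '' Ω)).topologicalClosure,
      ∀ ε : ℝ, 0 < ε → ∃ f ∈ (Submodule.span ℂ (F '' Ω)).topologicalClosure,
        (∃ t : ℝ, 0 < t ∧ T t f = f) ∧ ‖f - g‖ < ε) := by
  obtain ⟨z₀, hz₀, hz₀re⟩ := hΩim
  set V := (Submodule.span ℂ (F '' Ω)).topologicalClosure
  have hFV : ∀ z ∈ Ω, F z ∈ V := fun z hz =>
    Submodule.le_topologicalClosure _ (Submodule.subset_span (mem_image_of_mem F hz))
  have hdense : ∀ (S : Set ℂ) (W : Submodule ℂ B), (∃ᶠ z in 𝓝[≠] z₀, z ∈ S) →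
      (∀ z ∈ Ω ∩ S, F z ∈ W) → V ≤ W.topologicalClosure := fun S W hS hW =>
    (topologicalClosure_span_image_inter_eq hΩopen hΩconn.isPreconnected hFhol hz₀ hS).ge.trans
      (Submodule.topologicalClosure_mono (Submodule.span_le.2 (image_subset_iff.2 hW)))
  have hTV : ∀ t : ℝ, 0 ≤ t → ∀ x ∈ V, T t x ∈ V := fun t ht =>
    (Module.End.mem_invtSubmodule _).1 <| Submodule.topologicalClosure_mem_invtSubmodule <|
      span_image_mem_invtSubmodule fun z hz => ⟨_, hFeig z hz t ht⟩
  refine ⟨?_, hTV, ?_, ?_⟩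
  · obtain ⟨z, hz, hFz⟩ := hFne
    exact (Submodule.ne_bot_iff V).2 ⟨F z, hFV z hz, hFz⟩
  · refine exists_dense_orbit_of_le_topologicalClosure
      (Submodule.span ℂ (F '' Ω)).isClosed_topologicalClosure hTV
      (hdense _ _ (Complex.frequently_re_lt z₀) fun z hz => ⟨hFV z hz.1, ?_⟩)
      (hdense _ _ (Complex.frequently_lt_re z₀) fun z hz => ?_)
    · exact mem_decaySubmodule_of_eigen (hFeig z hz.1) (hz₀re ▸ hz.2)
    · exact mem_backwardDecaySubmodule_of_eigen (hFeig z hz.1) (hz₀re ▸ hz.2) (hFV z hz.1)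
  · refine exists_periodic_near_of_le_topologicalClosure
      (fun n => mul_pos Real.two_pi_pos (Nat.cast_pos.2 n.factorial_pos))
      (hdense _ _ (Complex.frequently_rat_mul_I hz₀re) ?_)
    rintro - ⟨hz, q, rfl⟩
    exact ⟨hFV _ hz, mem_eventuallyFixedSubmodule_of_eigen (hFeig _ hz)⟩

/-- The Banasiak–Moszyński criterion: a strongly continuous semigroup on a separable
complex Banach space admitting a not identically vanishing weakly holomorphic family of
eigenvectors, with eigenvalues filling an open connected set meeting the imaginary axis,
is subspace chaotic; more precisely its restriction to the closed span `V` of the family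
is chaotic on `V`. -/
theorem banasiak_moszynski_criterion
    {B : Type*} [NormedAddCommGroup B] [NormedSpace ℂ B] [CompleteSpace B]
    [TopologicalSpace.SeparableSpace B]
    (T : ℝ → B →L[ℂ] B)
    (hT0 : T 0 = 1)
    (hTadd : ∀ s t : ℝ, 0 ≤ s → 0 ≤ t → T (s + t) = (T s).comp (T t))
    (hTcont : ∀ f : B, ContinuousOn (fun t => T t f) (Set.Ici (0 : ℝ)))
    (Ω : Set ℂ) (hΩopen : IsOpen Ω) (hΩconn : IsConnected Ω)
    (hΩim : ∃ z ∈ Ω, z.re = 0)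
    (F : ℂ → B)
    (hFne : ∃ z ∈ Ω, F z ≠ 0)
    (hFeig : ∀ z ∈ Ω, ∀ t : ℝ, 0 ≤ t → T t (F z) = Complex.exp (z * t) • F z)
    (hFhol : ∀ φ : B →L[ℂ] ℂ, DifferentiableOn ℂ (fun z => φ (F z)) Ω) :
    (Submodule.span ℂ (F '' Ω)).topologicalClosure ≠ ⊥ ∧
    (∀ t : ℝ, 0 ≤ t → ∀ x ∈ (Submodule.span ℂ (F '' Ω)).topologicalClosure,
      T t x ∈ (Submodule.span ℂ (F '' Ω)).topologicalClosure) ∧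
    (∃ f ∈ (Submodule.span ℂ (F '' Ω)).topologicalClosure,
      ∀ g ∈ (Submodule.span ℂ (F '' Ω)).topologicalClosure,
        ∀ ε : ℝ, 0 < ε → ∃ t : ℝ, 0 ≤ t ∧ ‖T t f - g‖ < ε) ∧
    (∀ g ∈ (Submodule.span ℂ (F '' Ω)).topologicalClosure,
      ∀ ε : ℝ, 0 < ε → ∃ f ∈ (Submodule.span ℂ (F '' Ω)).topologicalClosure,
        (∃ t : ℝ, 0 < t ∧ T t f = f) ∧ ‖f - g‖ < ε) :=
  banasiak_moszynski_criterion_general T Ω hΩopen hΩconn hΩim F hFne hFeig hFhol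
end

section
/- Let b > 0 and 0 < δ < 1. Set P = {b² − z² : z ∈ ℂ, |Re z| ≤ bδ} and Ω = {w ∈ interior(P) : Im w < 0}. Then every w ∈ Ω satisfies Im(w − b²) < 0 (so the principal branch of the square root is holomorphic at w − b²), and the map h(w) = i b⁻¹ √(w − b²) is a holomorphic bijection from Ω onto the strip {ζ ∈ ℂ : 0 < Re ζ < δ and Im ζ > 0}. -/
/-!
Writing `ζ = h w`, the identity `(√c)² = c` gives `w = b² − (bζ)²`, and conversely
`√(−(bζ)²) = −i b ζ` when `Im ζ > 0`. So `h` is inverse to `g ζ = b² − (bζ)²` between the lower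
half-plane and the open first quadrant, and `P` is the `g`-image of `|Re ζ| ≤ δ`: if
`w = b² − z²`, then `z = ±bζ`, so `|Re z| = b Re ζ`. Continuity of `g` and `h` turns this
closed condition into `Re ζ < δ` on the interior of `P`.
-/

open Set Complex Filter Topology

namespace Complex

lemma cpow_inv_two_re_pos {c : ℂ} (hc : c.im ≠ 0) : 0 < (c ^ (2⁻¹ : ℂ)).re := by
  rw [cpow_inv_two_re, Real.sqrt_pos]
  linarith [neg_abs_le c.re, abs_re_lt_norm.2 hc]

lemma cpow_inv_two_im_neg {c : ℂ} (hc : c.im < 0) : (c ^ (2⁻¹ : ℂ)).im < 0 := by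
  rw [cpow_inv_two_im_eq_neg_sqrt hc, neg_lt_zero, Real.sqrt_pos]
  linarith [le_abs_self c.re, abs_re_lt_norm.2 hc.ne]

lemma abs_re_eq_of_sq_eq_sq {z u : ℂ} (h : z ^ 2 = u ^ 2) : |z.re| = |u.re| := by
  rcases sq_eq_sq_iff_eq_or_eq_neg.1 h with rfl | rfl
  · rfl
  · rw [neg_re, abs_neg]

end Complex

def parabolicRegion (b δ : ℝ) : Set ℂ :=
  {w : ℂ | ∃ z : ℂ, |z.re| ≤ b * δ ∧ w = (b : ℂ) ^ 2 - z ^ 2}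

noncomputable def stripChart (b : ℝ) (w : ℂ) : ℂ :=
  I * (b : ℂ)⁻¹ * (w - (b : ℂ) ^ 2) ^ ((1 : ℂ) / 2)

def stripChartInv (b : ℝ) (ζ : ℂ) : ℂ := (b : ℂ) ^ 2 - ((b : ℂ) * ζ) ^ 2

section StripChart

variable {b δ : ℝ} {w ζ : ℂ}

lemma re_I_mul_inv_ofReal_mul (b : ℝ) (s : ℂ) : (I * (b : ℂ)⁻¹ * s).re = -(b⁻¹ * s.im) := by
  simp [← ofReal_inv, mul_re, mul_im]

lemma im_I_mul_inv_ofReal_mul (b : ℝ) (s : ℂ) : (I * (b : ℂ)⁻¹ * s).im = b⁻¹ * s.re := by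
  simp [← ofReal_inv, mul_re, mul_im]

lemma im_stripChartInv (b : ℝ) (ζ : ℂ) : (stripChartInv b ζ).im = -(2 * b ^ 2 * ζ.re * ζ.im) := by
  simp [stripChartInv, sq, mul_re, mul_im]; ring

lemma stripChartInv_stripChart (hb : b ≠ 0) (w : ℂ) : stripChartInv b (stripChart b w) = w := by
  have hs : ((w - (b : ℂ) ^ 2) ^ ((1 : ℂ) / 2)) ^ 2 = w - (b : ℂ) ^ 2 := by
    rw [one_div]; exact cpow_ofNat_inv_pow _ 2
  set s := (w - (b : ℂ) ^ 2) ^ ((1 : ℂ) / 2)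
  have hbs : (b : ℂ) * (I * (b : ℂ)⁻¹ * s) = I * s := by field_simp [ofReal_ne_zero.2 hb]
  rw [stripChartInv, stripChart, hbs]
  linear_combination hs - s ^ 2 * I_sq

lemma stripChart_stripChartInv (hb : 0 < b) (hζ : 0 < ζ.im) :
    stripChart b (stripChartInv b ζ) = ζ := by
  have hroot : (-(I * b * ζ)) ^ 2 = stripChartInv b ζ - (b : ℂ) ^ 2 := by
    rw [stripChartInv]; linear_combination ((b : ℂ) ^ 2 * ζ ^ 2) * I_sq
  have hre : 0 < (-(I * b * ζ)).re := by simpa [mul_re] using mul_pos hb hζ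
  rw [stripChart, ← hroot, one_div, sq_cpow_two_inv hre]
  field_simp [ofReal_ne_zero.2 hb.ne']
  linear_combination (-ζ) * I_sq

lemma stripChart_mem_quadrant (hb : 0 < b) (hw : w.im < 0) :
    0 < (stripChart b w).re ∧ 0 < (stripChart b w).im := by
  have hc : (w - (b : ℂ) ^ 2).im < 0 := by simpa [sq] using hw
  rw [stripChart, one_div, re_I_mul_inv_ofReal_mul, im_I_mul_inv_ofReal_mul]
  exact ⟨neg_pos.2 (mul_neg_of_pos_of_neg (inv_pos.2 hb) (cpow_inv_two_im_neg hc)),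
    mul_pos (inv_pos.2 hb) (cpow_inv_two_re_pos hc.ne)⟩

lemma differentiableAt_stripChart (hw : w.im < 0) : DifferentiableAt ℂ (stripChart b) w := by
  have hc : w - (b : ℂ) ^ 2 ∈ slitPlane := Or.inr (by simpa [sq] using hw.ne)
  exact ((differentiableAt_id.sub_const _).cpow_const hc).const_mul _

lemma im_stripChartInv_neg (hb : b ≠ 0) (hre : 0 < ζ.re) (him : 0 < ζ.im) :
    (stripChartInv b ζ).im < 0 := by
  rw [im_stripChartInv, neg_lt_zero]
  positivity

lemma stripChartInv_mem_parabolicRegion (hb : 0 ≤ b) (hζ : |ζ.re| ≤ δ) :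
    stripChartInv b ζ ∈ parabolicRegion b δ :=
  ⟨b * ζ, by simpa [abs_mul, abs_of_nonneg hb] using mul_le_mul_of_nonneg_left hζ hb, rfl⟩

lemma re_stripChart_le (hb : 0 < b) (hwP : w ∈ parabolicRegion b δ) (hw : w.im < 0) :
    (stripChart b w).re ≤ δ := by
  obtain ⟨z, hz, rfl⟩ := hwP
  set ζ := stripChart b ((b : ℂ) ^ 2 - z ^ 2)
  have hsq : z ^ 2 = ((b : ℂ) * ζ) ^ 2 := by
    have := stripChartInv_stripChart hb.ne' ((b : ℂ) ^ 2 - z ^ 2)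
    rw [stripChartInv] at this
    linear_combination this
  have hbζ : |z.re| = b * ζ.re := by
    rw [abs_re_eq_of_sq_eq_sq hsq, re_ofReal_mul,
      abs_of_pos (mul_pos hb (stripChart_mem_quadrant hb hw).1)]
  exact le_of_mul_le_mul_left (hbζ ▸ hz) hb

lemma re_stripChart_lt (hb : 0 < b) (hwP : w ∈ interior (parabolicRegion b δ)) (hw : w.im < 0) :
    (stripChart b w).re < δ := by
  set ζ := stripChart b w
  obtain ⟨hζre, hζim⟩ := stripChart_mem_quadrant hb hw
  have hcont : Tendsto (fun t : ℝ => stripChartInv b (ζ + t)) (𝓝 0) (𝓝 w) := by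
    have : Continuous fun t : ℝ => stripChartInv b (ζ + t) := by
      unfold stripChartInv; fun_prop
    simpa [ζ, stripChartInv_stripChart hb.ne'] using this.tendsto 0
  -- `stripChartInv` sends `ζ + t` into `P` for small `t > 0`, and `ζ + t` stays in the quadrant.
  have hev : ∀ᶠ t : ℝ in 𝓝[>] 0, stripChartInv b (ζ + t) ∈ parabolicRegion b δ :=
    nhdsWithin_le_nhds (hcont.eventually_mem (mem_interior_iff_mem_nhds.1 hwP))
  obtain ⟨t, htP, ht⟩ := (hev.and self_mem_nhdsWithin).exists
  have hre : 0 < (ζ + t).re := by rw [add_re, ofReal_re]; exact add_pos hζre ht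
  have him : 0 < (ζ + t).im := by simpa using hζim
  have hle := re_stripChart_le hb htP (im_stripChartInv_neg hb.ne' hre him)
  rw [stripChart_stripChartInv hb him, add_re, ofReal_re] at hle
  linarith

lemma stripChartInv_mem_interior (hb : 0 < b) (hre : 0 < ζ.re) (hδ : ζ.re < δ) (him : 0 < ζ.im) :
    stripChartInv b ζ ∈ interior (parabolicRegion b δ) := by
  set w₀ := stripChartInv b ζ
  have hw₀ : w₀.im < 0 := im_stripChartInv_neg hb.ne' hre him
  have hcont : Tendsto (fun w => (stripChart b w).re) (𝓝 w₀) (𝓝 ζ.re) := by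
    simpa [w₀, stripChart_stripChartInv hb him, Function.comp_def] using
      (continuous_re.tendsto _).comp (differentiableAt_stripChart (b := b) hw₀).continuousAt.tendsto
  -- Near `w₀`, each `w` in the lower half-plane is `stripChartInv` of `stripChart b w`, whose
  -- real part lies in `(-δ, δ)`.
  rw [mem_interior_iff_mem_nhds]
  filter_upwards [hcont (Ioo_mem_nhds (by linarith : -δ < ζ.re) hδ),
    (continuous_im.isOpen_preimage _ isOpen_Iio).mem_nhds hw₀] with w hwδ hw
  rw [← stripChartInv_stripChart hb.ne' w]
  exact stripChartInv_mem_parabolicRegion hb.le (abs_lt.2 hwδ).le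

end StripChart

theorem parabolic_region_maps_to_strip_general
    (b δ : ℝ) (hb : 0 < b)
    (P : Set ℂ) (hP : P = {w : ℂ | ∃ z : ℂ, |z.re| ≤ b * δ ∧ w = (b : ℂ) ^ 2 - z ^ 2})
    (Ω : Set ℂ) (hΩ : Ω = {w ∈ interior P | w.im < 0})
    (h : ℂ → ℂ)
    (hh : h = fun w : ℂ => Complex.I * (b : ℂ)⁻¹ * (w - (b : ℂ) ^ 2) ^ ((1 : ℂ) / 2)) :
    (∀ w ∈ Ω, (w - (b : ℂ) ^ 2).im < 0) ∧
    DifferentiableOn ℂ h Ω ∧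
    Set.BijOn h Ω {ζ : ℂ | 0 < ζ.re ∧ ζ.re < δ ∧ 0 < ζ.im} := by
  change P = parabolicRegion b δ at hP
  change h = stripChart b at hh
  subst hP hΩ hh
  refine ⟨fun w hw => by simpa [sq] using hw.2,
    fun w hw => (differentiableAt_stripChart hw.2).differentiableWithinAt, ?_⟩
  refine InvOn.bijOn ⟨fun w _ => stripChartInv_stripChart hb.ne' w,
    fun ζ hζ => stripChart_stripChartInv hb hζ.2.2⟩ ?_ ?_
  · rintro w ⟨hwP, hw⟩
    obtain ⟨hre, him⟩ := stripChart_mem_quadrant hb hw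
    exact ⟨hre, re_stripChart_lt hb hwP hw, him⟩
  · rintro ζ ⟨hre, hδ, him⟩
    exact ⟨stripChartInv_mem_interior hb hre hδ him, im_stripChartInv_neg hb.ne' hre him⟩

/-- The principal square root maps the lower part of the interior of the shifted parabolic
region `P = {b² − z² : |Re z| ≤ bδ}` biholomorphically onto a strip: on
`Ω = {w ∈ int P : Im w < 0}` one has `Im(w − b²) < 0`, and
`h(w) = i b⁻¹ (w − b²)^{1/2}` is a holomorphic bijection from `Ω` onto
`{ζ : 0 < Re ζ < δ, Im ζ > 0}`. -/
theorem parabolic_region_maps_to_strip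
    (b δ : ℝ) (hb : 0 < b) (hδ0 : 0 < δ) (hδ1 : δ < 1)
    (P : Set ℂ) (hP : P = {w : ℂ | ∃ z : ℂ, |z.re| ≤ b * δ ∧ w = (b : ℂ) ^ 2 - z ^ 2})
    (Ω : Set ℂ) (hΩ : Ω = {w ∈ interior P | w.im < 0})
    (h : ℂ → ℂ)
    (hh : h = fun w : ℂ => Complex.I * (b : ℂ)⁻¹ * (w - (b : ℂ) ^ 2) ^ ((1 : ℂ) / 2)) :
    (∀ w ∈ Ω, (w - (b : ℂ) ^ 2).im < 0) ∧
    DifferentiableOn ℂ h Ω ∧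
    Set.BijOn h Ω {ζ : ℂ | 0 < ζ.re ∧ ζ.re < δ ∧ 0 < ζ.im} :=
  parabolic_region_maps_to_strip_general b δ hb P hP Ω hΩ h hh
end

section
/- Let (T(t))_{t≥0} be a chaotic strongly continuous semigroup on a Banach space B with B ≠ {0}. Then the generator of T has infinitely many purely imaginary eigenvalues; equivalently, the set {λ ∈ ℂ : Re λ = 0 and there exists x ∈ B, x ≠ 0, with T(t)x = e^{λt}x for all t ≥ 0} is infinite. -/
/-!
A periodic vector `f = T p f` lies in the closed span of the eigenvectors with imaginary
eigenvalues: its Fourier coefficient vectors `∫₀ᵖ e^{-μs} T s f ds`, `μ ∈ (2πi/p)ℤ`, are such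
eigenvectors (or zero), and a functional killing all of them kills `f` by uniqueness of Fourier
series. If there were only finitely many imaginary eigenvalues `μ`, then `T 1` would be
annihilated on this dense span, hence everywhere, by `∏ (X - e^μ)`, a polynomial with simple
roots on the unit circle. Lagrange interpolation then makes the powers of `T 1` bounded, so
every orbit is bounded and none is dense.
-/

open Set MeasureTheory Polynomial Complex

theorem IsCompact.exists_bound_opNorm_of_continuousOn_apply {X 𝕜 E F : Type*}
    [TopologicalSpace X] [NontriviallyNormedField 𝕜] [NormedAddCommGroup E] [NormedSpace 𝕜 E]
    [CompleteSpace E] [NormedAddCommGroup F] [NormedSpace 𝕜 F] {K : Set X} (hK : IsCompact K)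
    {T : X → E →L[𝕜] F} (hT : ∀ f, ContinuousOn (fun t => T t f) K) :
    ∃ M, ∀ t ∈ K, ‖T t‖ ≤ M := by
  obtain ⟨M, hM⟩ := banach_steinhaus (g := fun t : K => T t) fun f =>
    (hK.image_of_continuousOn (hT f)).isBounded.exists_norm_le.imp fun _ hC t =>
      hC _ (mem_image_of_mem _ t.2)
  exact ⟨M, fun t ht => hM ⟨t, ht⟩⟩

theorem ContinuousLinearMap.aeval_apply_of_apply_eq_smul {𝕜 E : Type*} [CommRing 𝕜]
    [TopologicalSpace 𝕜] [AddCommGroup E] [TopologicalSpace E] [Module 𝕜 E]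
    [IsTopologicalAddGroup E] [ContinuousConstSMul 𝕜 E] {L : E →L[𝕜] E} {μ : 𝕜} {x : E}
    (hx : L x = μ • x) (p : 𝕜[X]) : aeval L p x = p.eval μ • x := by
  have hcoe : ((aeval L p : E →L[𝕜] E) : E →ₗ[𝕜] E) = aeval (L : E →ₗ[𝕜] E) p := by
    induction p using Polynomial.induction_on' with
    | add p q hp hq => simp [hp, hq]
    | monomial n a => ext y; simp [Module.algebraMap_end_apply]
  exact (LinearMap.congr_fun hcoe x).trans (Module.End.aeval_apply_of_mem_apply_eq_smul hx)

theorem ContinuousLinearMap.exists_norm_pow_le_of_aeval_prod_X_sub_C_eq_zero {𝕜 E : Type*}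
    [NontriviallyNormedField 𝕜] [NormedAddCommGroup E] [NormedSpace 𝕜 E]
    (L : E →L[𝕜] E) (s : Finset 𝕜) (hs : ∀ μ ∈ s, ‖μ‖ ≤ 1)
    (hL : aeval L (∏ μ ∈ s, (X - C μ)) = 0) : ∃ C, ∀ n : ℕ, ‖L ^ n‖ ≤ C := by
  classical
  rcases s.eq_empty_or_nonempty with rfl | hne
  · refine ⟨0, fun n => ?_⟩
    rw [Finset.prod_empty, map_one] at hL
    rw [← mul_one (L ^ n), hL, mul_zero, norm_zero]
  set P : 𝕜 → E →L[𝕜] E := fun μ => aeval L (Lagrange.basis s id μ)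
  have hkill : ∀ q, Lagrange.nodal s id ∣ q → aeval L q = 0 := by
    rintro _ ⟨q, rfl⟩
    rw [map_mul, Lagrange.nodal_eq]
    simp only [id, hL, zero_mul]
  have hpow : ∀ μ ∈ s, ∀ n : ℕ, L ^ n * P μ = μ ^ n • P μ := by
    intro μ hμ n
    have hnodal : Lagrange.nodal s id ∣ (X - C μ) * Lagrange.basis s id μ := by
      rw [Lagrange.basis_eq_prod_sub_inv_mul_nodal_div hμ, ← Lagrange.nodal_erase_eq_nodal_div hμ,
        Lagrange.nodal_eq_mul_nodal_erase hμ]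
      exact mul_dvd_mul_left _ (dvd_mul_left _ _)
    have hzero := hkill _ (hnodal.trans (mul_dvd_mul_right (sub_dvd_pow_sub_pow X (C μ) n) _))
    rwa [sub_mul, map_sub, sub_eq_zero, map_mul, map_mul, ← map_pow, aeval_C, aeval_X_pow,
      Algebra.algebraMap_eq_smul_one, smul_one_mul] at hzero
  have hsum : ∑ μ ∈ s, P μ = 1 := by
    simp only [P, ← map_sum, Lagrange.sum_basis (Set.injOn_id _) hne, map_one]
  refine ⟨∑ μ ∈ s, ‖P μ‖, fun n => ?_⟩
  calc ‖L ^ n‖ = ‖∑ μ ∈ s, μ ^ n • P μ‖ := by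
        rw [← mul_one (L ^ n), ← hsum, Finset.mul_sum,
          Finset.sum_congr rfl fun μ hμ => hpow μ hμ n]
    _ ≤ ∑ μ ∈ s, ‖μ ^ n • P μ‖ := norm_sum_le _ _
    _ ≤ ∑ μ ∈ s, ‖P μ‖ := Finset.sum_le_sum fun μ hμ => by
        rw [norm_smul, norm_pow]
        exact mul_le_of_le_one_left (norm_nonneg _) (pow_le_one₀ (norm_nonneg _) (hs μ hμ))

theorem intervalIntegral_add_eq_of_periodic_Ici {E : Type*} [NormedAddCommGroup E]
    [NormedSpace ℝ E] {g : ℝ → E} {p r : ℝ} (hg : ContinuousOn g (Ici 0))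
    (hper : ∀ s, 0 ≤ s → g (s + p) = g s) (hp : 0 ≤ p) (hr : 0 ≤ r) :
    ∫ s in r..r + p, g s = ∫ s in 0..p, g s := by
  have hint : ∀ a b : ℝ, 0 ≤ a → 0 ≤ b → IntervalIntegrable g volume a b := fun a b ha hb =>
    (hg.mono fun x hx => (le_min ha hb).trans hx.1).intervalIntegrable
  have hshift : ∫ s in p..r + p, g s = ∫ s in 0..r, g s := by
    have hcomp := intervalIntegral.integral_comp_add_right (a := 0) (b := r) g p
    rw [zero_add] at hcomp
    rw [← hcomp]
    refine intervalIntegral.integral_congr fun s hs => hper s ?_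
    exact (le_min le_rfl hr).trans hs.1
  rw [← intervalIntegral.integral_add_adjacent_intervals (hint r p hr hp)
      (hint p _ hp (by positivity)), hshift, add_comm,
    intervalIntegral.integral_add_adjacent_intervals (hint 0 r le_rfl hr) (hint r p hr hp)]

theorem eqOn_zero_of_fourierCoeffOn_eq_zero {a b : ℝ} (hab : a < b) {u : ℝ → ℂ}
    (hu : ContinuousOn u (Icc a b)) (hper : u a = u b) (h : ∀ n, fourierCoeffOn hab u n = 0) :
    EqOn u 0 (Ico a b) := by
  obtain ⟨p, hp, rfl⟩ : ∃ p, 0 < p ∧ b = a + p := ⟨b - a, sub_pos.2 hab, by ring⟩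
  have := Fact.mk hp
  let U : C(AddCircle p, ℂ) := ⟨AddCircle.liftIco p a u, AddCircle.liftIco_continuous hper hu⟩
  have hcoeff : fourierCoeff U = 0 := funext fun n => (fourierCoeff_liftIco_eq u n).trans (h n)
  have hU : U = 0 := by
    have hsum := hasSum_fourier_series_of_summable (f := U) (by rw [hcoeff]; exact summable_zero)
    simp only [hcoeff, Pi.zero_apply, zero_smul] at hsum
    exact hsum.unique hasSum_zero
  intro x hx
  simpa [U, AddCircle.liftIco_coe_apply hx] using DFunLike.congr_fun hU (x : AddCircle p)

section Semigroup

variable {B : Type*} [NormedAddCommGroup B] [NormedSpace ℂ B] {T : ℝ → B →L[ℂ] B}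

theorem semigroup_natCast_mul_eq_pow (hT0 : T 0 = 1)
    (hTadd : ∀ s t : ℝ, 0 ≤ s → 0 ≤ t → T (s + t) = (T s).comp (T t)) {s : ℝ} (hs : 0 ≤ s)
    (n : ℕ) : T (n * s) = T s ^ n := by
  induction n with
  | zero => simp [hT0]
  | succ n ih =>
    rw [Nat.cast_succ, add_one_mul, hTadd _ _ (by positivity) hs, ih, pow_succ]
    rfl

theorem isBounded_orbit_of_norm_pow_le [CompleteSpace B] (hT0 : T 0 = 1)
    (hTadd : ∀ s t : ℝ, 0 ≤ s → 0 ≤ t → T (s + t) = (T s).comp (T t))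
    (hTcont : ∀ f : B, ContinuousOn (fun t => T t f) (Ici 0)) {s C : ℝ} (hs : 0 < s)
    (hC : ∀ n : ℕ, ‖T s ^ n‖ ≤ C) (f : B) :
    Bornology.IsBounded {y | ∃ t, 0 ≤ t ∧ T t f = y} := by
  obtain ⟨M, hM⟩ := (isCompact_Icc (a := 0) (b := s)).exists_bound_opNorm_of_continuousOn_apply
    (T := T) fun f => (hTcont f).mono Icc_subset_Ici_self
  refine isBounded_iff_forall_norm_le.2 ⟨M * (C * ‖f‖), ?_⟩
  rintro _ ⟨t, ht, rfl⟩
  set n := ⌊t / s⌋₊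
  have hn : n * s ≤ t := (le_div_iff₀ hs).1 (Nat.floor_le (div_nonneg ht hs.le))
  have hn' : t < n * s + s := by
    have := Nat.lt_floor_add_one (t / s)
    rwa [div_lt_iff₀ hs, add_one_mul] at this
  have hsplit : T t f = T (t - n * s) ((T s ^ n) f) := by
    rw [← semigroup_natCast_mul_eq_pow hT0 hTadd hs.le, ← ContinuousLinearMap.comp_apply,
      ← hTadd _ _ (sub_nonneg.2 hn) (by positivity), sub_add_cancel]
  calc ‖T t f‖ ≤ ‖T (t - n * s)‖ * ‖(T s ^ n) f‖ := hsplit ▸ (T _).le_opNorm _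
    _ ≤ M * (C * ‖f‖) :=
      mul_le_mul (hM _ ⟨sub_nonneg.2 hn, by linarith⟩)
        (((T s ^ n).le_opNorm f).trans (mul_le_mul_of_nonneg_right (hC n) (norm_nonneg f)))
        (norm_nonneg _) ((norm_nonneg _).trans (hM 0 ⟨le_rfl, hs.le⟩))

theorem semigroup_apply_integral_exp_smul [CompleteSpace B]
    (hTadd : ∀ s t : ℝ, 0 ≤ s → 0 ≤ t → T (s + t) = (T s).comp (T t))
    (hTcont : ∀ f : B, ContinuousOn (fun t => T t f) (Ici 0)) {f : B} {p : ℝ} (hp : 0 < p)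
    (hf : T p f = f) {μ : ℂ} (hμ : exp (μ * p) = 1) {r : ℝ} (hr : 0 ≤ r) :
    T r (∫ s in 0..p, exp (-(μ * s)) • T s f) =
      exp (μ * r) • ∫ s in 0..p, exp (-(μ * s)) • T s f := by
  set g : ℝ → B := fun s => exp (-(μ * s)) • T s f
  have hg : ContinuousOn g (Ici 0) := by
    refine ContinuousOn.smul (Continuous.continuousOn ?_) (hTcont f)
    fun_prop
  have hgper : ∀ s, 0 ≤ s → g (s + p) = g s := by
    intro s hs
    have hexp : exp (-(μ * ↑(s + p))) = exp (-(μ * s)) := by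
      rw [ofReal_add, mul_add, neg_add, exp_add, exp_neg (μ * p), hμ, inv_one, mul_one]
    simp only [g, hexp, hTadd s p hs hp.le, ContinuousLinearMap.comp_apply, hf]
  have hshift : ∀ s, 0 ≤ s → T r (g s) = exp (μ * r) • g (s + r) := by
    intro s hs
    have hexp : exp (-(μ * s)) = exp (μ * r) * exp (-(μ * ↑(s + r))) := by
      rw [← exp_add]; congr 1; push_cast; ring
    simp only [g, map_smul, hexp, mul_smul, add_comm s r, hTadd r s hr hs,
      ContinuousLinearMap.comp_apply]
  calc T r (∫ s in 0..p, g s) = ∫ s in 0..p, T r (g s) :=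
        ((T r).intervalIntegral_comp_comm
          (hg.mono fun x hx => (le_min le_rfl hp.le).trans hx.1).intervalIntegrable).symm
    _ = ∫ s in 0..p, exp (μ * r) • g (s + r) :=
        intervalIntegral.integral_congr fun s hs => hshift s ((le_min le_rfl hp.le).trans hs.1)
    _ = exp (μ * r) • ∫ s in r..r + p, g s := by
        rw [intervalIntegral.integral_smul, intervalIntegral.integral_comp_add_right, zero_add,
          add_comm p r]
    _ = exp (μ * r) • ∫ s in 0..p, g s := by
        rw [intervalIntegral_add_eq_of_periodic_Ici hg hgper hp.le hr]

theorem dual_apply_eq_zero_of_periodic [CompleteSpace B] (hT0 : T 0 = 1)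
    (hTadd : ∀ s t : ℝ, 0 ≤ s → 0 ≤ t → T (s + t) = (T s).comp (T t))
    (hTcont : ∀ f : B, ContinuousOn (fun t => T t f) (Ici 0)) (φ : StrongDual ℂ B)
    (hφ : ∀ (μ : ℂ) (x : B), μ.re = 0 → (∀ t : ℝ, 0 ≤ t → T t x = exp (μ * t) • x) → φ x = 0)
    {f : B} {p : ℝ} (hp : 0 < p) (hf : T p f = f) : φ f = 0 := by
  set u : ℝ → ℂ := fun s => φ (T s f)
  have hu : ContinuousOn u (Icc 0 p) :=
    φ.continuous.comp_continuousOn ((hTcont f).mono Icc_subset_Ici_self)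
  have hcoeff : ∀ n : ℤ, fourierCoeffOn hp u n = 0 := by
    intro n
    set μ : ℂ := 2 * Real.pi * I * n / p
    have hμre : μ.re = 0 := by simp [μ, div_ofReal_re]
    have hμ : exp (μ * p) = 1 := by
      have hp' : (p : ℂ) ≠ 0 := ofReal_ne_zero.2 hp.ne'
      rw [show μ * p = n * (2 * Real.pi * I) by simp only [μ]; field_simp]
      exact exp_int_mul_two_pi_mul_I n
    have hint : IntervalIntegrable (fun s : ℝ => exp (-(μ * s)) • T s f) volume 0 p := by
      refine ContinuousOn.intervalIntegrable (ContinuousOn.smul (Continuous.continuousOn ?_)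
        ((hTcont f).mono fun x hx => (le_min le_rfl hp.le).trans hx.1))
      fun_prop
    have hintegral : ∫ s in 0..p, fourier (-n) (s : AddCircle (p - 0)) • u s =
        φ (∫ s in 0..p, exp (-(μ * s)) • T s f) := by
      rw [← φ.intervalIntegral_comp_comm hint]
      refine intervalIntegral.integral_congr fun s _ => ?_
      simp only [u, fourier_coe_apply, map_smul, smul_eq_mul, μ, sub_zero]
      congr 2
      push_cast
      ring
    rw [fourierCoeffOn_eq_integral, hintegral, hφ μ _ hμre fun r hr =>
      semigroup_apply_integral_exp_smul hTadd hTcont hp hf hμ hr, smul_zero]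
  have hu0 := eqOn_zero_of_fourierCoeffOn_eq_zero hp hu (by simp [u, hT0, hf]) hcoeff
    (left_mem_Ico.2 hp)
  simpa [u, hT0] using hu0

theorem mem_topologicalClosure_span_eigenvectors_of_periodic [CompleteSpace B] (hT0 : T 0 = 1)
    (hTadd : ∀ s t : ℝ, 0 ≤ s → 0 ≤ t → T (s + t) = (T s).comp (T t))
    (hTcont : ∀ f : B, ContinuousOn (fun t => T t f) (Ici 0)) {f : B} {p : ℝ} (hp : 0 < p)
    (hf : T p f = f) :
    f ∈ (Submodule.span ℂ {x : B | ∃ μ : ℂ, μ.re = 0 ∧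
      ∀ t : ℝ, 0 ≤ t → T t x = exp (μ * t) • x}).topologicalClosure := by
  set K := (Submodule.span ℂ {x : B | ∃ μ : ℂ, μ.re = 0 ∧
      ∀ t : ℝ, 0 ≤ t → T t x = exp (μ * t) • x}).topologicalClosure
  by_contra hfK
  have : IsClosed (K : Set B) := Submodule.isClosed_topologicalClosure _
  obtain ⟨ψ, hψ⟩ := SeparatingDual.exists_ne_zero (R := ℂ) (x := K.mkQ f)
    (by rwa [Ne, Submodule.mkQ_apply, Submodule.Quotient.mk_eq_zero])
  refine hψ (dual_apply_eq_zero_of_periodic hT0 hTadd hTcont (ψ.comp K.mkQL)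
    (fun μ x hμ hx => ?_) hp hf)
  have hxK : x ∈ K := Submodule.le_topologicalClosure _ (Submodule.subset_span ⟨μ, hμ, hx⟩)
  simp [(Submodule.Quotient.mk_eq_zero K).2 hxK]

end Semigroup

/-- The generator of a chaotic strongly continuous semigroup on a non-zero Banach space
has infinitely many purely imaginary eigenvalues. -/
theorem chaotic_semigroup_infinitely_many_imaginary_eigenvalues
    {B : Type*} [NormedAddCommGroup B] [NormedSpace ℂ B] [CompleteSpace B] [Nontrivial B]
    (T : ℝ → B →L[ℂ] B)
    (hT0 : T 0 = 1)
    (hTadd : ∀ s t : ℝ, 0 ≤ s → 0 ≤ t → T (s + t) = (T s).comp (T t))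
    (hTcont : ∀ f : B, ContinuousOn (fun t => T t f) (Set.Ici (0 : ℝ)))
    (hdense : ∃ f : B, Dense {y : B | ∃ t : ℝ, 0 ≤ t ∧ T t f = y})
    (hper : Dense {f : B | ∃ t : ℝ, 0 < t ∧ T t f = f}) :
    {lam : ℂ | lam.re = 0 ∧ ∃ x : B, x ≠ 0 ∧
      ∀ t : ℝ, 0 ≤ t → T t x = Complex.exp (lam * t) • x}.Infinite := by
  intro hfin
  obtain ⟨f₀, hf₀⟩ := hdense
  set L := aeval (T 1) (∏ μ ∈ hfin.toFinset.image exp, (X - C μ))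
  have hker : {x : B | ∃ μ : ℂ, μ.re = 0 ∧ ∀ t : ℝ, 0 ≤ t → T t x = exp (μ * t) • x} ⊆
      L.ker := by
    rintro x ⟨μ, hμ, hx⟩
    rcases eq_or_ne x 0 with rfl | hx0
    · exact L.ker.zero_mem
    show L x = 0
    have hμS : exp μ ∈ hfin.toFinset.image exp :=
      Finset.mem_image_of_mem exp (hfin.mem_toFinset.2 ⟨hμ, x, hx0, hx⟩)
    rw [ContinuousLinearMap.aeval_apply_of_apply_eq_smul (by simpa using hx 1 zero_le_one),
      eval_prod, Finset.prod_eq_zero hμS (by simp), zero_smul]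
  have hL : L = 0 := by
    have hperiodic : {f : B | ∃ t : ℝ, 0 < t ∧ T t f = f} ⊆ (L.ker : Set B) := by
      rintro f ⟨p, hp, hf⟩
      exact Submodule.topologicalClosure_minimal _ (Submodule.span_le.2 hker) L.isClosed_ker
        (mem_topologicalClosure_span_eigenvectors_of_periodic hT0 hTadd hTcont hp hf)
    ext x
    exact L.isClosed_ker.closure_subset_iff.2 hperiodic (hper x)
  have hnorm : ∀ z ∈ hfin.toFinset.image exp, ‖z‖ ≤ 1 := by
    simp only [Finset.mem_image, Set.Finite.mem_toFinset]
    rintro _ ⟨μ, ⟨hμ, -⟩, rfl⟩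
    rw [norm_exp, hμ, Real.exp_zero]
  obtain ⟨C, hC⟩ := (T 1).exists_norm_pow_le_of_aeval_prod_X_sub_C_eq_zero _ hnorm hL
  have hbdd := (isBounded_orbit_of_norm_pow_le hT0 hTadd hTcont one_pos hC f₀).closure
  rw [hf₀.closure_eq] at hbdd
  exact NormedSpace.unbounded_univ ℂ B hbdd
end
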